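/- arXiv:2511.00717 — 11 statements merged into one kernel-verified Lean document; each statement's English description precedes it below -/
import Mathlib

section
/- For a capacity w and an increasing function Λ: ℝ → (0,1), the risk measure ΛVaR^w(X) = inf{x ∈ ℝ : w(X > x) ≤ Λ(x)} is quasi-star-shaped: for every random variable X, every t ∈ ℝ and every λ ∈ [0,1], ΛVaR^w(λX + (1−λ)t) ≤ max(ΛVaR^w(X), t). -/
open Set

/-- Lambda Value-at-Risk of `X` with respect to a capacity `w` and function `Λ`:
`inf {x ∈ ℝ : w(X > x) ≤ Λ(x)}`, valued in the extended reals (`inf ∅ = ⊤`). -/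
noncomputable def LVaR {Ω : Type*} (w : Set Ω → ℝ) (Λ : ℝ → ℝ) (X : Ω → ℝ) : EReal :=
  sInf ((fun x : ℝ => (x : EReal)) '' {x : ℝ | w {ω | x < X ω} ≤ Λ x})

/-- For an increasing `Λ : ℝ → (0,1)` and a capacity `w`, `ΛVaR^w` is quasi-star-shaped:
`ΛVaR^w(λX + (1-λ)t) ≤ max(ΛVaR^w(X), t)`. -/
theorem stmt_1 {Ω : Type*} (w : Set Ω → ℝ)
    (hw_mono : ∀ A B : Set Ω, A ⊆ B → w A ≤ w B)
    (hw_empty : w (∅ : Set Ω) = 0) (hw_univ : w (univ : Set Ω) = 1)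
    (Λ : ℝ → ℝ) (hΛ : ∀ x, Λ x ∈ Ioo (0 : ℝ) 1) (hΛ_mono : Monotone Λ)
    (X : Ω → ℝ) (t : ℝ) (lam : ℝ) (hlam : lam ∈ Icc (0 : ℝ) 1) :
    LVaR w Λ (fun ω => lam * X ω + (1 - lam) * t) ≤ max (LVaR w Λ X) (t : EReal) := by
  set Y := fun ω => lam * X ω + (1 - lam) * t with hY
  have key : ∀ x : ℝ, w {ω | x < X ω} ≤ Λ x →
      LVaR w Λ Y ≤ ((max x t : ℝ) : EReal) := by
    intro x hx
    apply sInf_le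
    refine ⟨max x t, ?_, rfl⟩
    show w {ω | max x t < Y ω} ≤ Λ (max x t)
    rcases eq_or_lt_of_le hlam.1 with h0 | h0
    · have he : {ω | max x t < Y ω} = (∅ : Set Ω) := by
        ext ω
        simp only [hY, mem_setOf_eq, mem_empty_iff_false, iff_false, not_lt, ← h0]
        simpa using le_max_right x t
      rw [he, hw_empty]
      exact le_of_lt (hΛ (max x t)).1
    · have sub : {ω | max x t < Y ω} ⊆ {ω | x < X ω} := by
        intro ω hω
        simp only [hY, mem_setOf_eq] at hω ⊢
        have h1 := le_max_left x t
        have h2 := le_max_right x t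
        nlinarith [hlam.2, h0, hω, h1, h2]
      calc w {ω | max x t < Y ω} ≤ w {ω | x < X ω} := hw_mono _ _ sub
        _ ≤ Λ x := hx
        _ ≤ Λ (max x t) := hΛ_mono (le_max_left x t)
  by_cases hS : {x : ℝ | w {ω | x < X ω} ≤ Λ x}.Nonempty
  · refine le_of_forall_gt_imp_ge_of_dense ?_
    intro c hc
    rw [max_lt_iff] at hc
    obtain ⟨h1, h2⟩ := hc
    have h1' : sInf ((fun x : ℝ => (x : EReal)) '' {x : ℝ | w {ω | x < X ω} ≤ Λ x}) < c := h1
    rw [sInf_lt_iff] at h1'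
    obtain ⟨e, ⟨x, hxS, rfl⟩, hec⟩ := h1'
    have := key x hxS
    refine le_trans this (le_of_lt ?_)
    have : ((max x t : ℝ) : EReal) = max (x : EReal) (t : EReal) := by
      rcases le_total x t with h | h
      · simp [max_eq_right h, max_eq_right (EReal.coe_le_coe_iff.mpr h)]
      · simp [max_eq_left h, max_eq_left (EReal.coe_le_coe_iff.mpr h)]
    rw [this]
    exact max_lt hec h2
  · have hT : LVaR w Λ X = ⊤ := by
      rw [not_nonempty_iff_eq_empty] at hS
      unfold LVaR
      simp [hS]
    simp [hT]
end

section
/- For a capacity w and an increasing function Λ: ℝ → (0,1), ΛVaR^w is cash-subadditive: for every random variable X and every m ≥ 0, ΛVaR^w(X + m) ≤ ΛVaR^w(X) + m. If instead Λ is decreasing, then ΛVaR^w is cash-supadditive: ΛVaR^w(X + m) ≥ ΛVaR^w(X) + m for all m ≥ 0. -/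
/-!
Translating `X` by a constant `m` translates the acceptance set `{x | w(X > x) ≤ Λ x}` by `m`,
except that `Λ` is then evaluated at the shifted point: `ΛVaR^w(X + m) = Λ(· + m)VaR^w(X) + m`.
Since `ΛVaR^w` is antitone in `Λ`, and for `m ≥ 0` the function `Λ(· + m)` lies above `Λ` when
`Λ` is increasing and below it when `Λ` is decreasing, both inequalities follow.
-/

open Set

noncomputable def EReal.addRightOrderIso (m : ℝ) : EReal ≃o EReal where
  toFun x := x + m
  invFun x := x - m
  left_inv _ := EReal.add_sub_cancel_right
  right_inv _ := EReal.sub_add_cancel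
  map_rel_iff' := (EReal.addLECancellable_coe m).add_le_add_iff_right

theorem LVaR_add_const {Ω : Type*} (w : Set Ω → ℝ) (Λ : ℝ → ℝ) (X : Ω → ℝ) (m : ℝ) :
    LVaR w Λ (fun ω => X ω + m) = LVaR w (fun x => Λ (x + m)) X + m := by
  have hshift : {x : ℝ | w {ω | x < X ω + m} ≤ Λ x} =
      (· + m) '' {y : ℝ | w {ω | y < X ω} ≤ Λ (y + m)} := by
    ext x
    simp only [mem_ofPred_eq, mem_image]
    refine ⟨fun hx => ⟨x - m, ?_, sub_add_cancel x m⟩, ?_⟩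
    · simpa only [sub_lt_iff_lt_add, sub_add_cancel] using hx
    · rintro ⟨y, hy, rfl⟩
      simpa only [add_lt_add_iff_right] using hy
  -- `· + m` is an order automorphism of `EReal`, hence commutes with `sInf`.
  change _ = EReal.addRightOrderIso m _
  rw [LVaR, LVaR, map_sInf, hshift, image_image, image_image]
  rfl

theorem LVaR_le_of_le {Ω : Type*} (w : Set Ω → ℝ) {Λ Λ' : ℝ → ℝ} (h : Λ ≤ Λ') (X : Ω → ℝ) :
    LVaR w Λ' X ≤ LVaR w Λ X :=
  sInf_le_sInf <| image_mono fun _ hx => le_trans hx (h _)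

theorem stmt_2_general {Ω : Type*} (w : Set Ω → ℝ) (Λ : ℝ → ℝ) :
    (Monotone Λ → ∀ (X : Ω → ℝ) (m : ℝ), 0 ≤ m →
      LVaR w Λ (fun ω => X ω + m) ≤ LVaR w Λ X + (m : EReal)) ∧
    (Antitone Λ → ∀ (X : Ω → ℝ) (m : ℝ), 0 ≤ m →
      LVaR w Λ X + (m : EReal) ≤ LVaR w Λ (fun ω => X ω + m)) := by
  refine ⟨fun hmono X m hm => ?_, fun hanti X m hm => ?_⟩
  · rw [LVaR_add_const]
    gcongr
    exact LVaR_le_of_le w (fun _ => hmono (le_add_of_nonneg_right hm)) X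
  · rw [LVaR_add_const]
    gcongr
    exact LVaR_le_of_le w (fun _ => hanti (le_add_of_nonneg_right hm)) X

/-- If `Λ : ℝ → (0,1)` is increasing then `ΛVaR^w` is cash-subadditive:
`ΛVaR^w(X + m) ≤ ΛVaR^w(X) + m` for `m ≥ 0`; if `Λ` is decreasing then `ΛVaR^w`
is cash-supadditive: `ΛVaR^w(X + m) ≥ ΛVaR^w(X) + m` for `m ≥ 0`. -/
theorem stmt_2 {Ω : Type*} (w : Set Ω → ℝ)
    (hw_mono : ∀ A B : Set Ω, A ⊆ B → w A ≤ w B)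
    (hw_empty : w (∅ : Set Ω) = 0) (hw_univ : w (univ : Set Ω) = 1)
    (Λ : ℝ → ℝ) (hΛ : ∀ x, Λ x ∈ Ioo (0 : ℝ) 1) :
    (Monotone Λ → ∀ (X : Ω → ℝ) (m : ℝ), 0 ≤ m →
      LVaR w Λ (fun ω => X ω + m) ≤ LVaR w Λ X + (m : EReal)) ∧
    (Antitone Λ → ∀ (X : Ω → ℝ) (m : ℝ), 0 ≤ m →
      LVaR w Λ X + (m : EReal) ≤ LVaR w Λ (fun ω => X ω + m)) :=
  stmt_2_general w Λ
end

section
/- Let Λ: ℝ → (0,1) be increasing and W a family of capacities on (Ω,𝓕), and set w̄(A) = sup_{w ∈ W} w(A). Then w̄ is a capacity and for every random variable X, sup_{w ∈ W} ΛVaR^w(X) = ΛVaR^{w̄}(X). -/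
open Set

/-! Since `w ≤ w̄` pointwise, each `ΛVaR^w(X)` is at most `ΛVaR^{w̄}(X)`. Conversely, for monotone
`w` and `Λ` the set `{x | w(X > x) ≤ Λ(x)}` is an upper set, so any real `x` strictly above
`sup_w ΛVaR^w(X)` lies in it for every `w ∈ W`, hence `w̄(X > x) ≤ Λ(x)` and `ΛVaR^{w̄}(X) ≤ x`. -/

structure IsCapacity {Ω : Type*} (w : Set Ω → ℝ) : Prop where
  mono : Monotone w
  empty : w ∅ = 0
  univ : w univ = 1

namespace IsCapacity

variable {Ω ι : Type*} {w : Set Ω → ℝ}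

theorem le_one (hw : IsCapacity w) (A : Set Ω) : w A ≤ 1 :=
  hw.univ ▸ hw.mono (subset_univ A)

theorem bddAbove_range {w : ι → Set Ω → ℝ} (hw : ∀ i, IsCapacity (w i)) (A : Set Ω) :
    BddAbove (range fun i => w i A) :=
  ⟨1, by rintro _ ⟨i, rfl⟩; exact (hw i).le_one A⟩

theorem iSup [Nonempty ι] {w : ι → Set Ω → ℝ} (hw : ∀ i, IsCapacity (w i)) :
    IsCapacity fun A => ⨆ i, w i A where
  mono _ _ hAB := ciSup_mono (bddAbove_range hw _) fun i => (hw i).mono hAB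
  empty := by simp only [(hw _).empty, ciSup_const]
  univ := by simp only [(hw _).univ, ciSup_const]

end IsCapacity

section LVaR

variable {Ω : Type*} {w w' : Set Ω → ℝ} {Λ : ℝ → ℝ} {X : Ω → ℝ}

theorem LVaR_le_LVaR (h : ∀ A, w A ≤ w' A) : LVaR w Λ X ≤ LVaR w' Λ X :=
  sInf_le_sInf <| image_mono fun _ hx => (h _).trans hx

theorem LVaR_le_coe {x : ℝ} (h : w {ω | x < X ω} ≤ Λ x) : LVaR w Λ X ≤ x :=
  sInf_le ⟨x, h, rfl⟩

theorem le_of_LVaR_lt_coe (hw : Monotone w) (hΛ : Monotone Λ) {x : ℝ}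
    (h : LVaR w Λ X < x) : w {ω | x < X ω} ≤ Λ x := by
  obtain ⟨_, ⟨y, hy, rfl⟩, hyx⟩ := sInf_lt_iff.mp h
  have hyx : y ≤ x := (EReal.coe_lt_coe_iff.mp hyx).le
  calc w {ω | x < X ω} ≤ w {ω | y < X ω} := hw fun ω hω => hyx.trans_lt hω
    _ ≤ Λ y := hy
    _ ≤ Λ x := hΛ hyx

theorem iSup_LVaR_eq_LVaR_iSup {ι : Type*} [Nonempty ι] {w : ι → Set Ω → ℝ}
    (hw : ∀ i, Monotone (w i)) (hbdd : ∀ A, BddAbove (range fun i => w i A))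
    (hΛ : Monotone Λ) : ⨆ i, LVaR (w i) Λ X = LVaR (fun A => ⨆ i, w i A) Λ X := by
  refine le_antisymm (iSup_le fun i => LVaR_le_LVaR fun A => le_ciSup (hbdd A) i) ?_
  by_contra! h
  obtain ⟨x, hx_sup, hx_lt⟩ := EReal.exists_between_coe_real h
  have hx : ∀ i, w i {ω | x < X ω} ≤ Λ x := fun i =>
    le_of_LVaR_lt_coe (hw i) hΛ ((le_iSup _ i).trans_lt hx_sup)
  exact (LVaR_le_coe (ciSup_le hx)).not_gt hx_lt

end LVaR

theorem stmt_3_general {Ω : Type*} (W : Set (Set Ω → ℝ)) (hW : W.Nonempty)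
    (hcap : ∀ w ∈ W, (∀ A B : Set Ω, A ⊆ B → w A ≤ w B) ∧
      w (∅ : Set Ω) = 0 ∧ w (univ : Set Ω) = 1)
    (Λ : ℝ → ℝ) (hΛ_mono : Monotone Λ) :
    let wbar : Set Ω → ℝ := fun A => ⨆ w : W, (w : Set Ω → ℝ) A
    (∀ A B : Set Ω, A ⊆ B → wbar A ≤ wbar B) ∧
    wbar (∅ : Set Ω) = 0 ∧ wbar (univ : Set Ω) = 1 ∧
    ∀ X : Ω → ℝ, (⨆ w : W, LVaR (w : Set Ω → ℝ) Λ X) = LVaR wbar Λ X := by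
  have := hW.to_subtype
  have hW_cap (w : W) : IsCapacity (w : Set Ω → ℝ) :=
    ⟨(hcap w w.2).1, (hcap w w.2).2.1, (hcap w w.2).2.2⟩
  have hbar := IsCapacity.iSup hW_cap
  exact ⟨hbar.mono, hbar.empty, hbar.univ, fun X =>
    iSup_LVaR_eq_LVaR_iSup (fun w => (hW_cap w).mono) (IsCapacity.bddAbove_range hW_cap) hΛ_mono⟩

/-- For `Λ : ℝ → (0,1)` increasing and a nonempty family `W` of capacities,
`w̄ = sup_{w ∈ W} w` is a capacity, and `sup_{w ∈ W} ΛVaR^w(X) = ΛVaR^{w̄}(X)`. -/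
theorem stmt_3 {Ω : Type*} (W : Set (Set Ω → ℝ)) (hW : W.Nonempty)
    (hcap : ∀ w ∈ W, (∀ A B : Set Ω, A ⊆ B → w A ≤ w B) ∧
      w (∅ : Set Ω) = 0 ∧ w (univ : Set Ω) = 1)
    (Λ : ℝ → ℝ) (hΛ : ∀ x, Λ x ∈ Ioo (0 : ℝ) 1) (hΛ_mono : Monotone Λ) :
    let wbar : Set Ω → ℝ := fun A => ⨆ w : W, (w : Set Ω → ℝ) A
    (∀ A B : Set Ω, A ⊆ B → wbar A ≤ wbar B) ∧
    wbar (∅ : Set Ω) = 0 ∧ wbar (univ : Set Ω) = 1 ∧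
    ∀ X : Ω → ℝ, (⨆ w : W, LVaR (w : Set Ω → ℝ) Λ X) = LVaR wbar Λ X :=
  stmt_3_general W hW hcap Λ hΛ_mono
end

section
/- Let Λ: ℝ → (0,1) be increasing and W a family of capacities, and set 𝑤̲(A) = inf_{w ∈ W} w(A). Then for every random variable X, inf_{w ∈ W} ΛVaR^{+,w}(X) = ΛVaR^{+,𝑤̲}(X), where ΛVaR^{+,w}(X) = sup{x ∈ ℝ : w(X > x) ≥ Λ(x)}. -/
open Set

/-- Upper Lambda Value-at-Risk of `X` with respect to a capacity `w` and function `Λ`: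
`sup {x ∈ ℝ : w(X > x) ≥ Λ(x)}`, valued in the extended reals (`sup ∅ = ⊥`). -/
noncomputable def LVaRplus {Ω : Type*} (w : Set Ω → ℝ) (Λ : ℝ → ℝ) (X : Ω → ℝ) : EReal :=
  sSup ((fun x : ℝ => (x : EReal)) '' {x : ℝ | Λ x ≤ w {ω | x < X ω}})

/-! For monotone `Λ` and a monotone `w` the set `{x | Λ x ≤ w {X > x}}` is a lower set, so every
real strictly below `ΛVaR^{+,w}(X)` belongs to it. Hence a real `x` below every `ΛVaR^{+,w}(X)`
satisfies `Λ x ≤ w {X > x}` for all `w ∈ W`, i.e. `Λ x ≤ w̲ {X > x}`, which gives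
`x ≤ ΛVaR^{+,w̲}(X)`; the reverse inequality is monotonicity of `ΛVaR^+` in `w`. -/

section LVaRplus

variable {Ω : Type*} {Λ : ℝ → ℝ} {X : Ω → ℝ}

theorem LVaRplus_mono {w w' : Set Ω → ℝ} (h : ∀ A, w A ≤ w' A) :
    LVaRplus w Λ X ≤ LVaRplus w' Λ X :=
  sSup_le_sSup <| image_mono fun _ hx => le_trans hx (h _)

theorem le_LVaRplus {w : Set Ω → ℝ} {x : ℝ} (hx : Λ x ≤ w {ω | x < X ω}) :
    (x : EReal) ≤ LVaRplus w Λ X :=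
  le_sSup (mem_image_of_mem _ hx)

theorem le_of_coe_lt_LVaRplus {w : Set Ω → ℝ} (hw : Monotone w) (hΛ : Monotone Λ) {x : ℝ}
    (hx : (x : EReal) < LVaRplus w Λ X) : Λ x ≤ w {ω | x < X ω} := by
  obtain ⟨_, ⟨y, hy, rfl⟩, hxy⟩ := lt_sSup_iff.mp hx
  have hxy : x < y := EReal.coe_lt_coe_iff.mp hxy
  calc Λ x ≤ Λ y := hΛ hxy.le
    _ ≤ w {ω | y < X ω} := hy
    _ ≤ w {ω | x < X ω} := hw fun _ hω => hxy.trans hω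

theorem iInf_LVaRplus {ι : Type*} [Nonempty ι] {w : ι → Set Ω → ℝ} (hw : ∀ i, Monotone (w i))
    (hbdd : ∀ A, BddBelow (range fun i => w i A)) (hΛ : Monotone Λ) :
    ⨅ i, LVaRplus (w i) Λ X = LVaRplus (fun A => ⨅ i, w i A) Λ X := by
  refine le_antisymm (EReal.ge_of_forall_gt_iff_ge.mp fun x hx => le_LVaRplus ?_)
    (le_iInf fun i => LVaRplus_mono fun A => ciInf_le (hbdd A) i)
  exact le_ciInf fun i => le_of_coe_lt_LVaRplus (hw i) hΛ (hx.trans_le (iInf_le _ i))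

end LVaRplus

theorem stmt_4_general {Ω : Type*} (W : Set (Set Ω → ℝ)) (hW : W.Nonempty)
    (hcap : ∀ w ∈ W, (∀ A B : Set Ω, A ⊆ B → w A ≤ w B) ∧
      w (∅ : Set Ω) = 0 ∧ w (univ : Set Ω) = 1)
    (Λ : ℝ → ℝ) (hΛ_mono : Monotone Λ)
    (X : Ω → ℝ) :
    (⨅ w : W, LVaRplus (w : Set Ω → ℝ) Λ X) =
      LVaRplus (fun A => ⨅ w : W, (w : Set Ω → ℝ) A) Λ X := by
  have : Nonempty W := hW.to_subtype
  have hmono (w : W) : Monotone (w : Set Ω → ℝ) := (hcap w w.2).1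
  have hbdd (A : Set Ω) : BddBelow (range fun w : W => (w : Set Ω → ℝ) A) :=
    ⟨0, forall_mem_range.mpr fun w => (hcap w w.2).2.1 ▸ hmono w (empty_subset A)⟩
  exact iInf_LVaRplus hmono hbdd hΛ_mono

/-- For `Λ : ℝ → (0,1)` increasing and a nonempty family `W` of capacities,
with `w̲ = inf_{w ∈ W} w`, we have `inf_{w ∈ W} ΛVaR^{+,w}(X) = ΛVaR^{+,w̲}(X)`. -/
theorem stmt_4 {Ω : Type*} (W : Set (Set Ω → ℝ)) (hW : W.Nonempty)
    (hcap : ∀ w ∈ W, (∀ A B : Set Ω, A ⊆ B → w A ≤ w B) ∧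
      w (∅ : Set Ω) = 0 ∧ w (univ : Set Ω) = 1)
    (Λ : ℝ → ℝ) (hΛ : ∀ x, Λ x ∈ Ioo (0 : ℝ) 1) (hΛ_mono : Monotone Λ)
    (X : Ω → ℝ) :
    (⨅ w : W, LVaRplus (w : Set Ω → ℝ) Λ X) =
      LVaRplus (fun A => ⨅ w : W, (w : Set Ω → ℝ) A) Λ X :=
  stmt_4_general W hW hcap Λ hΛ_mono X
end

section
/- For an increasing function Λ: ℝ → (0,1) and a capacity w, for every random variable X: ΛVaR^w(X) = inf_{x ∈ ℝ} max(VaR^w_{Λ(x)}(X), x) = sup_{x ∈ ℝ} min(VaR^w_{Λ(x)}(X), x), where VaR^w_p(X) = inf{y ∈ ℝ : w(X > y) ≤ p} is the Choquet quantile at level p. -/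
open Set

/-- Choquet quantile at level `p` : `VaR^w_p(X) = inf {y ∈ ℝ : w(X > y) ≤ p}`. -/
noncomputable def CVaR {Ω : Type*} (w : Set Ω → ℝ) (p : ℝ) (X : Ω → ℝ) : EReal :=
  sInf ((fun y : ℝ => (y : EReal)) '' {y : ℝ | w {ω | y < X ω} ≤ p})

/-- For increasing `Λ : ℝ → (0,1)` and a capacity `w`:
`ΛVaR^w(X) = inf_x max(VaR^w_{Λ(x)}(X), x) = sup_x min(VaR^w_{Λ(x)}(X), x)`. -/
theorem stmt_5 {Ω : Type*} (w : Set Ω → ℝ)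
    (hw_mono : ∀ A B : Set Ω, A ⊆ B → w A ≤ w B)
    (hw_empty : w (∅ : Set Ω) = 0) (hw_univ : w (univ : Set Ω) = 1)
    (Λ : ℝ → ℝ) (hΛ : ∀ x, Λ x ∈ Ioo (0 : ℝ) 1) (hΛ_mono : Monotone Λ)
    (X : Ω → ℝ) :
    LVaR w Λ X = (⨅ x : ℝ, max (CVaR w (Λ x) X) (x : EReal)) ∧
    LVaR w Λ X = (⨆ x : ℝ, min (CVaR w (Λ x) X) (x : EReal)) := by
  have hmemL : ∀ z : ℝ, w {ω | z < X ω} ≤ Λ z → LVaR w Λ X ≤ (z : EReal) :=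
    fun z hz => sInf_le ⟨z, hz, rfl⟩
  have hmemC : ∀ (p : ℝ) (z : ℝ), w {ω | z < X ω} ≤ p → CVaR w p X ≤ (z : EReal) :=
    fun p z hz => sInf_le ⟨z, hz, rfl⟩
  have hsetmono : ∀ a b : ℝ, a ≤ b → w {ω | b < X ω} ≤ w {ω | a < X ω} :=
    fun a b hab => hw_mono _ _ (fun ω hω => lt_of_le_of_lt hab hω)
  constructor
  · apply le_antisymm
    · apply le_iInf
      intro x
      by_cases hx : w {ω | x < X ω} ≤ Λ x
      · exact le_max_of_le_right (hmemL x hx)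
      · refine le_max_of_le_left (le_sInf ?_)
        rintro b ⟨y, hy, rfl⟩
        have hxy : x < y := by
          by_contra hxy
          push_neg at hxy
          exact hx (le_trans (hsetmono _ _ hxy) hy)
        exact hmemL y (le_trans hy (hΛ_mono hxy.le))
    · apply le_sInf
      rintro b ⟨x, hx, rfl⟩
      have hfx : CVaR w (Λ x) X ≤ (x : EReal) := hmemC _ x hx
      exact le_trans (iInf_le _ x) (le_of_eq (max_eq_right hfx))
  · apply le_antisymm
    · by_contra h
      push_neg at h
      have hbot : (⊥ : EReal) < LVaR w Λ X := lt_of_le_of_lt bot_le h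
      obtain ⟨x, hx1, hx2⟩ := EReal.exists_between_coe_real h
      have hx : ¬ w {ω | x < X ω} ≤ Λ x := fun hh => absurd (hmemL x hh) (not_le.mpr hx2)
      have hfx : (x : EReal) ≤ CVaR w (Λ x) X := by
        apply le_sInf
        rintro b ⟨y, hy, rfl⟩
        rw [EReal.coe_le_coe_iff]
        by_contra hxy
        push_neg at hxy
        exact hx (le_trans (hsetmono _ _ hxy.le) hy)
      have : (x : EReal) ≤ ⨆ x : ℝ, min (CVaR w (Λ x) X) (x : EReal) := by
        refine le_trans ?_ (le_iSup _ x)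
        exact le_min hfx le_rfl
      exact absurd (lt_of_le_of_lt this hx1) (lt_irrefl _)
    · apply iSup_le
      intro x
      by_contra h
      push_neg at h
      obtain ⟨b, ⟨z, hz, rfl⟩, hb⟩ := sInf_lt_iff.mp h
      have hzx : z < x := by
        have h2 := lt_of_lt_of_le hb (min_le_right _ _)
        exact EReal.coe_lt_coe_iff.mp h2
      have hC : CVaR w (Λ x) X ≤ (z : EReal) :=
        hmemC _ z (le_trans hz (hΛ_mono hzx.le))
      exact absurd (lt_of_le_of_lt hC (lt_of_lt_of_le hb (min_le_left _ _))) (lt_irrefl _)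
end

section
/- Let {𝓐_x}_{x ∈ ℝ} be an increasing family of downsets in 𝓕 (i.e., 𝓐_x ⊆ 𝓐_y for x ≤ y, each 𝓐_x contains ∅ and is closed under taking measurable subsets). Define 𝓐_x^+ = ⋂_{y > x} 𝓐_y and 𝓐_x^− = ⋃_{y < x} 𝓐_y. If {𝓑_x}_{x∈ℝ} is any family with 𝓐_x^− ⊆ 𝓑_x ⊆ 𝓐_x^+ for all x, then for every random variable X: inf{x ∈ ℝ : {X > x} ∈ 𝓑_x} = inf{x ∈ ℝ : {X > x} ∈ 𝓐_x}. -/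
open Set

lemma sInf_aux {S T : Set ℝ} (h : ∀ x ∈ S, ∀ y : ℝ, x < y → y ∈ T) :
    sInf ((fun x : ℝ => (x : EReal)) '' T) ≤ sInf ((fun x : ℝ => (x : EReal)) '' S) := by
  refine le_sInf ?_
  rintro b ⟨x, hx, rfl⟩
  by_contra hlt
  push_neg at hlt
  obtain ⟨z, hxz, hz⟩ := EReal.exists_between_coe_real hlt
  have : (z : EReal) ∈ (fun x : ℝ => (x : EReal)) '' T :=
    ⟨z, h x hx z (by exact_mod_cast hxz), rfl⟩
  exact absurd (sInf_le this) (not_le.2 hz)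

/-- For an increasing family of downsets `𝓐_x` and any family `𝓑_x` squeezed between
`𝓐_x^- = ⋃_{y<x} 𝓐_y` and `𝓐_x^+ = ⋂_{y>x} 𝓐_y`, the induced risk measures coincide. -/
theorem stmt_6 {Ω : Type*} (𝓐 𝓑 : ℝ → Set (Set Ω))
    (hdown : ∀ x : ℝ, ∅ ∈ 𝓐 x ∧ ∀ A B : Set Ω, B ∈ 𝓐 x → A ⊆ B → A ∈ 𝓐 x)
    (hmono : ∀ x y : ℝ, x ≤ y → 𝓐 x ⊆ 𝓐 y)
    (h𝓑_lower : ∀ x : ℝ, (⋃ y ∈ Iio x, 𝓐 y) ⊆ 𝓑 x)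
    (h𝓑_upper : ∀ x : ℝ, 𝓑 x ⊆ ⋂ y ∈ Ioi x, 𝓐 y)
    (X : Ω → ℝ) :
    sInf ((fun x : ℝ => (x : EReal)) '' {x : ℝ | {ω | x < X ω} ∈ 𝓑 x}) =
      sInf ((fun x : ℝ => (x : EReal)) '' {x : ℝ | {ω | x < X ω} ∈ 𝓐 x}) := by
  apply le_antisymm
  · -- B-inf ≤ A-inf : x ∈ A-set, y > x ⇒ y ∈ B-set
    refine sInf_aux (fun x hx y hxy => ?_)
    refine h𝓑_lower y (mem_biUnion (show x ∈ Iio y from hxy) ?_)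
    exact (hdown x).2 _ _ hx (fun ω hω => lt_trans hxy hω)
  · -- A-inf ≤ B-inf : x ∈ B-set, y > x ⇒ y ∈ A-set
    refine sInf_aux (fun x hx y hxy => ?_)
    have h1 : {ω | x < X ω} ∈ 𝓐 y := by
      have := h𝓑_upper x hx
      simpa using (mem_iInter₂.1 this y hxy)
    exact (hdown y).2 _ _ h1 (fun ω hω => lt_trans hxy hω)
end

section
/- Let φ: [0,∞) → ℝ ∪ {∞} be convex with φ(1)=0 and φ(0)=lim_{x↓0} φ(x), let ℙ be a probability measure, δ > 0, and 𝓟_φ(ℙ,δ) = {ℚ ≪ ℙ : E^ℙ[φ(dℚ/dℙ)] ≤ δ}. Then for every event A with 0 < ℙ(A) < 1, sup_{ℚ ∈ 𝓟_φ(ℙ,δ)} ℚ(A) = sup{t ∈ [ℙ(A),1] : ℙ(A)·φ(t/ℙ(A)) + (1−ℙ(A))·φ((1−t)/(1−ℙ(A))) ≤ δ}. -/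
open Set MeasureTheory Filter

/-- The positive part of an extended real, as an extended nonnegative real. -/
noncomputable def ePos (a : EReal) : ENNReal :=
  if a = ⊤ then ⊤ else ENNReal.ofReal a.toReal

/-- The (extended-real-valued) integral of an `EReal`-valued function:
integral of the positive part minus integral of the negative part. -/
noncomputable def eIntegral {Ω : Type*} [MeasurableSpace Ω] (μ : Measure Ω)
    (f : Ω → EReal) : EReal :=
  ((∫⁻ ω, ePos (f ω) ∂μ : ENNReal) : EReal) - ((∫⁻ ω, ePos (-(f ω)) ∂μ : ENNReal) : EReal)

/-! For `Q` in the ball, Jensen's inequality on `A` and on `Aᶜ` bounds the divergence of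
`Bernoulli (Q A)` from `Bernoulli (ℙ A)` by `D_φ(Q‖ℙ)`, so `Q A` belongs to the right-hand set
(or lies below `ℙ A`, which does). Conversely every `t` of that set is `Q A` for the measure with
density `t / ℙ A` on `A` and `(1 - t) / (1 - ℙ A)` on `Aᶜ`, whose divergence is exactly that
Bernoulli divergence.

Since `φ` may take the value `⊤`, Jensen's inequality is proved by hand: if the density `Y` is not
a.s. equal to its mean `u`, it charges both sides of `u`; then either `Y` leaves the effective
domain of `φ` with positive probability (and the divergence is `⊤`), or `u` is interior to that
domain and a supporting line of `φ` at `u` does the job. -/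

open scoped ENNReal

section EIntegral

variable {Ω : Type*} [MeasurableSpace Ω] {μ : Measure Ω} {f g : Ω → EReal}

lemma ePos_eq_toENNReal : ePos = EReal.toENNReal := rfl

lemma eIntegral_mono_ae (h : ∀ᵐ ω ∂μ, f ω ≤ g ω) : eIntegral μ f ≤ eIntegral μ g := by
  refine EReal.sub_le_sub (EReal.coe_ennreal_le_coe_ennreal_iff.mpr (lintegral_mono_ae ?_))
    (EReal.coe_ennreal_le_coe_ennreal_iff.mpr (lintegral_mono_ae ?_))
  all_goals filter_upwards [h] with ω hω
  · exact EReal.toENNReal_le_toENNReal hω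
  · exact EReal.toENNReal_le_toENNReal (EReal.neg_le_neg_iff.mpr hω)

lemma eIntegral_congr_ae (h : f =ᵐ[μ] g) : eIntegral μ f = eIntegral μ g :=
  le_antisymm (eIntegral_mono_ae (h.mono fun _ ↦ le_of_eq))
    (eIntegral_mono_ae (h.mono fun _ hω ↦ hω.ge))

lemma eIntegral_coe {u : Ω → ℝ} (hu : Integrable u μ) :
    eIntegral μ (fun ω ↦ (u ω : EReal)) = ((∫ ω, u ω ∂μ : ℝ) : EReal) := by
  have hneg : ∫⁻ ω, ENNReal.ofReal (-u ω) ∂μ ≠ ∞ := hu.neg.lintegral_lt_top.ne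
  rw [integral_eq_lintegral_pos_part_sub_lintegral_neg_part hu, EReal.coe_sub,
    EReal.coe_ennreal_toReal hu.lintegral_lt_top.ne, EReal.coe_ennreal_toReal hneg]
  simp only [eIntegral, ← EReal.coe_neg, ePos_eq_toENNReal, EReal.real_coe_toENNReal]

-- No finiteness is needed: `⊥` absorbs `⊤` in `EReal`, so this is only associativity.
lemma eIntegral_add_compl {A : Set Ω} (hA : MeasurableSet A) (f : Ω → EReal) :
    eIntegral μ f = eIntegral (μ.restrict A) f + eIntegral (μ.restrict Aᶜ) f := by
  rw [eIntegral, eIntegral, eIntegral, ← lintegral_add_compl (μ := μ) _ hA,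
    ← lintegral_add_compl (μ := μ) (fun ω ↦ ePos (-f ω)) hA, EReal.coe_ennreal_add,
    EReal.coe_ennreal_add, sub_eq_add_neg, sub_eq_add_neg, sub_eq_add_neg,
    EReal.neg_add (Or.inl (EReal.coe_ennreal_ne_bot _)) (Or.inr (EReal.coe_ennreal_ne_bot _))]
  ac_rfl

lemma eIntegral_const [IsFiniteMeasure μ] {c : EReal} (hc : c ≠ ⊥) :
    eIntegral μ (fun _ ↦ c) = (μ.real univ : EReal) * c := by
  induction c using EReal.rec with
  | bot => exact absurd rfl hc
  | coe r => rw [eIntegral_coe (integrable_const r), integral_const, smul_eq_mul, EReal.coe_mul]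
  | top =>
    simp only [eIntegral, ePos_eq_toENNReal, EReal.neg_top, EReal.toENNReal_top,
      EReal.toENNReal_bot, lintegral_const, zero_mul, EReal.coe_ennreal_zero, sub_zero]
    rcases eq_or_ne (μ univ) 0 with h0 | h0
    · simp [measureReal_def, h0]
    · rw [ENNReal.top_mul h0, EReal.coe_ennreal_top, EReal.coe_mul_top_of_pos]
      exact ENNReal.toReal_pos h0 (measure_ne_top μ univ)

lemma eIntegral_eq_top {g : Ω → ℝ} (hg : Integrable g μ) (hgf : ∀ᵐ ω ∂μ, (g ω : EReal) ≤ f ω)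
    (hf : ∫⁻ ω, ePos (f ω) ∂μ = ∞) : eIntegral μ f = ⊤ := by
  have hneg : ∫⁻ ω, ePos (-f ω) ∂μ ≤ ∫⁻ ω, ENNReal.ofReal (-g ω) ∂μ := by
    refine lintegral_mono_ae (hgf.mono fun ω hω ↦ ?_)
    rw [← EReal.real_coe_toENNReal, EReal.coe_neg]
    exact EReal.toENNReal_le_toENNReal (EReal.neg_le_neg_iff.mpr hω)
  rw [eIntegral, hf, EReal.coe_ennreal_top, EReal.top_sub]
  exact EReal.coe_ennreal_eq_top_iff.not.mpr (hneg.trans_lt hg.neg.lintegral_lt_top).ne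

end EIntegral

def EConvexOnNonneg (φ : ℝ → EReal) : Prop :=
  ∀ a ∈ Ici (0 : ℝ), ∀ b ∈ Ici (0 : ℝ), ∀ t ∈ Icc (0 : ℝ) 1,
    φ (t * a + (1 - t) * b) ≤ (t : EReal) * φ a + ((1 - t : ℝ) : EReal) * φ b

def effectiveDomain (φ : ℝ → EReal) : Set ℝ := {x | 0 ≤ x ∧ φ x ≠ ⊤}

namespace EConvexOnNonneg

variable {φ : ℝ → EReal}

lemma eq_bot_of_eq_bot (hφ : EConvexOnNonneg φ) {a b t : ℝ} (ha : 0 ≤ a) (hb : 0 ≤ b)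
    (ht : t ∈ Ioc (0 : ℝ) 1) (hφa : φ a = ⊥) : φ (t * a + (1 - t) * b) = ⊥ := by
  have h := hφ a ha b hb t (Ioc_subset_Icc_self ht)
  rwa [hφa, EReal.coe_mul_bot_of_pos ht.1, EReal.bot_add, le_bot_iff] at h

lemma ne_bot (hφ : EConvexOnNonneg φ) (h1 : φ 1 ≠ ⊥) {x : ℝ} (hx : 0 ≤ x) : φ x ≠ ⊥ := by
  intro hφx
  -- `1` is a combination of `x`, with positive weight, and of `2` or `0`.
  rcases lt_or_ge x 1 with hx1 | hx1
  · have h2x : 0 < 2 - x := by linarith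
    have h := hφ.eq_bot_of_eq_bot hx zero_le_two (t := 1 / (2 - x))
      ⟨by positivity, by rw [div_le_one h2x]; linarith⟩ hφx
    rw [show 1 / (2 - x) * x + (1 - 1 / (2 - x)) * 2 = 1 by field_simp; ring] at h
    exact h1 h
  · have hx0 : 0 < x := by linarith
    have h := hφ.eq_bot_of_eq_bot hx le_rfl (t := 1 / x)
      ⟨by positivity, by rw [div_le_one hx0]; exact hx1⟩ hφx
    rw [show 1 / x * x + (1 - 1 / x) * 0 = 1 by simp [hx0.ne']] at h
    exact h1 h

lemma le_coe_combination (hφ : EConvexOnNonneg φ) (hbot : ∀ x, 0 ≤ x → φ x ≠ ⊥)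
    {x y a b : ℝ} (hx : x ∈ effectiveDomain φ) (hy : y ∈ effectiveDomain φ) (ha : 0 ≤ a)
    (hb : 0 ≤ b) (hab : a + b = 1) :
    φ (a • x + b • y) ≤ ((a * (φ x).toReal + b * (φ y).toReal : ℝ) : EReal) := by
  obtain rfl : b = 1 - a := by linarith
  have h := hφ x hx.1 y hy.1 a ⟨ha, by linarith⟩
  rwa [← EReal.coe_toReal hx.2 (hbot x hx.1), ← EReal.coe_toReal hy.2 (hbot y hy.1),
    ← EReal.coe_mul, ← EReal.coe_mul, ← EReal.coe_add] at h

lemma convexOn_toReal (hφ : EConvexOnNonneg φ) (hbot : ∀ x, 0 ≤ x → φ x ≠ ⊥) :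
    ConvexOn ℝ (effectiveDomain φ) (fun x ↦ (φ x).toReal) := by
  refine ⟨?_, ?_⟩
  · intro x hx y hy a b ha hb hab
    refine ⟨by have := hx.1; have := hy.1; simp only [smul_eq_mul]; positivity, ?_⟩
    exact ne_top_of_le_ne_top (EReal.coe_ne_top _) (hφ.le_coe_combination hbot hx hy ha hb hab)
  · intro x hx y hy a b ha hb hab
    have hz : 0 ≤ a • x + b • y := by
      have := hx.1; have := hy.1; simp only [smul_eq_mul]; positivity
    have h := EReal.toReal_le_toReal (hφ.le_coe_combination hbot hx hy ha hb hab) (hbot _ hz)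
      (EReal.coe_ne_top _)
    rwa [EReal.toReal_coe] at h

lemma exists_supporting_line (hφ : EConvexOnNonneg φ) (hbot : ∀ x, 0 ≤ x → φ x ≠ ⊥)
    {a u b : ℝ} (ha : a ∈ effectiveDomain φ) (hb : b ∈ effectiveDomain φ) (hau : a < u)
    (hub : u < b) :
    φ u ≠ ⊤ ∧ ∃ m : ℝ, ∀ x, 0 ≤ x → (((φ u).toReal + m * (x - u) : ℝ) : EReal) ≤ φ x := by
  have hf := hφ.convexOn_toReal hbot
  have hIcc : Icc a b ⊆ effectiveDomain φ := hf.1.ordConnected.out ha hb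
  have hu : u ∈ interior (effectiveDomain φ) :=
    interior_mono (Ioo_subset_Icc_self.trans hIcc) (by rw [interior_Ioo]; exact ⟨hau, hub⟩)
  refine ⟨(hIcc ⟨hau.le, hub.le⟩).2, derivWithin (fun x ↦ (φ x).toReal) (Ioi u) u,
    fun x hx ↦ ?_⟩
  by_cases hxtop : φ x = ⊤
  · simp [hxtop]
  have hxD : x ∈ effectiveDomain φ := ⟨hx, hxtop⟩
  rw [← EReal.coe_toReal hxtop (hbot x hx), EReal.coe_le_coe_iff]
  rcases lt_trichotomy x u with hxu | rfl | hux
  · have h := (hf.slope_le_leftDeriv_of_mem_interior hxD hu hxu).trans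
      (hf.leftDeriv_le_rightDeriv_of_mem_interior hu)
    rw [slope_def_field, div_le_iff₀ (sub_pos.2 hxu)] at h
    linarith
  · simp
  · have h := hf.rightDeriv_le_slope_of_mem_interior hu hxD hux
    rw [slope_def_field, le_div_iff₀ (sub_pos.2 hux)] at h
    linarith

lemma exists_affine_minorant (hφ : EConvexOnNonneg φ) (hbot : ∀ x, 0 ≤ x → φ x ≠ ⊥) :
    ∃ c m : ℝ, ∀ x, 0 ≤ x → ((c + m * x : ℝ) : EReal) ≤ φ x := by
  rcases (effectiveDomain φ).subsingleton_or_nontrivial with hD | hD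
  · rcases (effectiveDomain φ).eq_empty_or_nonempty with hempty | ⟨a, ha⟩
    · refine ⟨0, 0, fun x hx ↦ ?_⟩
      have : φ x = ⊤ := by_contra fun hx' ↦ hempty.subset ⟨hx, hx'⟩
      simp [this]
    · refine ⟨(φ a).toReal, 0, fun x hx ↦ ?_⟩
      by_cases hxtop : φ x = ⊤
      · simp [hxtop]
      obtain rfl : x = a := hD ⟨hx, hxtop⟩ ha
      simpa using EReal.coe_toReal_le (hbot x hx)
  · obtain ⟨a, ha, b, hb, hab⟩ := Set.nontrivial_iff_exists_lt.mp hD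
    obtain ⟨-, m, hm⟩ := hφ.exists_supporting_line hbot ha hb (left_lt_add_div_two.2 hab)
      (add_div_two_lt_right.2 hab)
    exact ⟨(φ ((a + b) / 2)).toReal - m * ((a + b) / 2), m, fun x hx ↦ by
      convert hm x hx using 2; ring⟩

end EConvexOnNonneg

section Jensen

variable {Ω : Type*} [MeasurableSpace Ω] {μ : Measure Ω} {φ : ℝ → EReal}

lemma lintegral_ePos_comp_eq_top (hφ : EConvexOnNonneg φ) (hbot : ∀ x, 0 ≤ x → φ x ≠ ⊥)
    {Y : Ω → ℝ} (hY0 : ∀ ω, 0 ≤ Y ω) (hY : AEMeasurable Y μ)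
    (hdom : ¬ ∀ᵐ ω ∂μ, Y ω ∈ effectiveDomain φ) : ∫⁻ ω, ePos (φ (Y ω)) ∂μ = ∞ := by
  set E := Y ⁻¹' (effectiveDomain φ)ᶜ
  have hE : NullMeasurableSet E μ :=
    hY.nullMeasurableSet_preimage (hφ.convexOn_toReal hbot).1.ordConnected.measurableSet.compl
  have hEpos : μ E ≠ 0 := by rwa [ae_iff] at hdom
  refine top_le_iff.mp ?_
  calc ∞ = ∫⁻ ω, E.indicator (fun _ ↦ ∞) ω ∂μ := by
        rw [lintegral_indicator_const₀ hE, ENNReal.top_mul hEpos]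
    _ ≤ ∫⁻ ω, ePos (φ (Y ω)) ∂μ := lintegral_mono fun ω ↦ by
        by_cases hω : ω ∈ E
        · have : φ (Y ω) = ⊤ := by_contra fun h ↦ hω ⟨hY0 ω, h⟩
          simp [this, ePos]
        · simp [hω]

variable [IsFiniteMeasure μ]

lemma ae_eq_const_or_frequently_lt_and_gt {Y : Ω → ℝ} (hY : Integrable Y μ) {u : ℝ}
    (hmean : ∫ ω, Y ω ∂μ = μ.real univ * u) :
    Y =ᵐ[μ] (fun _ ↦ u) ∨ (∃ᵐ ω ∂μ, Y ω < u) ∧ ∃ᵐ ω ∂μ, u < Y ω := by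
  have hint : ∫ _, u ∂μ = ∫ ω, Y ω ∂μ := by rw [integral_const, smul_eq_mul, hmean]
  by_contra! h
  obtain ⟨hne, hlt⟩ := h
  refine hne ?_
  by_cases hbelow : ∃ᵐ ω ∂μ, Y ω < u
  · exact (integral_eq_iff_of_ae_le hY (integrable_const u) (hlt hbelow)).mp hint.symm
  · have hge : (fun _ ↦ u) ≤ᵐ[μ] Y := (not_frequently.mp hbelow).mono fun _ ↦ not_lt.mp
    exact ((integral_eq_iff_of_ae_le (integrable_const u) hY hge).mp hint).symm

lemma EConvexOnNonneg.mul_le_eIntegral_comp (hφ : EConvexOnNonneg φ)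
    (hbot : ∀ x, 0 ≤ x → φ x ≠ ⊥) {Y : Ω → ℝ} (hY0 : ∀ ω, 0 ≤ Y ω) (hY : Integrable Y μ)
    {u : ℝ} (hu : 0 ≤ u) (hmean : ∫ ω, Y ω ∂μ = μ.real univ * u) :
    (μ.real univ : EReal) * φ u ≤ eIntegral μ (fun ω ↦ φ (Y ω)) := by
  rcases ae_eq_const_or_frequently_lt_and_gt hY hmean with hconst | ⟨hbelow, habove⟩
  · rw [eIntegral_congr_ae (hconst.mono fun _ ↦ congrArg φ), eIntegral_const (hbot u hu)]
  by_cases hdom : ∀ᵐ ω ∂μ, Y ω ∈ effectiveDomain φ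
  · obtain ⟨ω₁, hω₁, ha⟩ := (hbelow.and_eventually hdom).exists
    obtain ⟨ω₂, hω₂, hb⟩ := (habove.and_eventually hdom).exists
    obtain ⟨hu_top, m, hm⟩ := hφ.exists_supporting_line hbot ha hb hω₁ hω₂
    set ℓ : ℝ → ℝ := fun x ↦ (φ u).toReal + m * (x - u)
    have hℓY : (fun ω ↦ ℓ (Y ω)) = fun ω ↦ ((φ u).toReal - m * u) + m * Y ω := by
      funext ω; simp only [ℓ]; ring
    have hℓ : Integrable (fun ω ↦ ℓ (Y ω)) μ := hℓY ▸ (integrable_const _).add (hY.const_mul m)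
    calc (μ.real univ : EReal) * φ u = ((∫ ω, ℓ (Y ω) ∂μ : ℝ) : EReal) := by
          rw [← EReal.coe_toReal hu_top (hbot u hu), ← EReal.coe_mul, EReal.coe_eq_coe_iff, hℓY,
            integral_add (integrable_const _) (hY.const_mul m), integral_const_mul, hmean,
            integral_const, smul_eq_mul]
          ring
      _ = eIntegral μ (fun ω ↦ (ℓ (Y ω) : EReal)) := (eIntegral_coe hℓ).symm
      _ ≤ eIntegral μ (fun ω ↦ φ (Y ω)) := eIntegral_mono_ae (ae_of_all _ fun ω ↦ hm _ (hY0 ω))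
  · obtain ⟨c, m, hmin⟩ := hφ.exists_affine_minorant hbot
    rw [eIntegral_eq_top ((integrable_const c).add (hY.const_mul m))
      (ae_of_all _ fun ω ↦ hmin _ (hY0 ω))
      (lintegral_ePos_comp_eq_top hφ hbot hY0 hY.aemeasurable hdom)]
    exact le_top

end Jensen

/-- `D_φ(Bernoulli t ‖ Bernoulli p)`. -/
noncomputable def bernoulliDivergence (φ : ℝ → EReal) (p t : ℝ) : EReal :=
  (p : EReal) * φ (t / p) + ((1 - p : ℝ) : EReal) * φ ((1 - t) / (1 - p))

section Divergence

variable {Ω : Type*} [MeasurableSpace Ω] {φ : ℝ → EReal}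

lemma EConvexOnNonneg.mul_le_eIntegral_restrict_rnDeriv (hφ : EConvexOnNonneg φ)
    (hbot : ∀ x, 0 ≤ x → φ x ≠ ⊥) {ℙ Q : Measure Ω} [IsFiniteMeasure ℙ] [IsFiniteMeasure Q]
    (hQ : Q ≪ ℙ) {B : Set Ω} (hB : ℙ.real B ≠ 0) :
    (ℙ.real B : EReal) * φ (Q.real B / ℙ.real B)
      ≤ eIntegral (ℙ.restrict B) (fun ω ↦ φ ((Q.rnDeriv ℙ ω).toReal)) := by
  have h := hφ.mul_le_eIntegral_comp hbot (μ := ℙ.restrict B) (u := Q.real B / ℙ.real B)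
    (fun _ ↦ ENNReal.toReal_nonneg) Measure.integrable_toReal_rnDeriv.restrict
    (div_nonneg measureReal_nonneg measureReal_nonneg)
    (by rw [Measure.setIntegral_toReal_rnDeriv hQ, measureReal_restrict_apply_univ,
      mul_div_cancel₀ _ hB])
  rwa [measureReal_restrict_apply_univ] at h

lemma EConvexOnNonneg.bernoulliDivergence_le_eIntegral_rnDeriv (hφ : EConvexOnNonneg φ)
    (hbot : ∀ x, 0 ≤ x → φ x ≠ ⊥) {ℙ Q : Measure Ω} [IsProbabilityMeasure ℙ]
    [IsProbabilityMeasure Q] (hQ : Q ≪ ℙ) {A : Set Ω} (hA : MeasurableSet A)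
    (hA0 : 0 < ℙ.real A) (hA1 : ℙ.real A < 1) :
    bernoulliDivergence φ (ℙ.real A) (Q.real A)
      ≤ eIntegral ℙ (fun ω ↦ φ ((Q.rnDeriv ℙ ω).toReal)) := by
  have hAc := hφ.mul_le_eIntegral_restrict_rnDeriv hbot hQ (B := Aᶜ)
    (by rw [probReal_compl_eq_one_sub hA]; linarith)
  rw [probReal_compl_eq_one_sub hA, probReal_compl_eq_one_sub hA] at hAc
  rw [eIntegral_add_compl hA]
  exact add_le_add (hφ.mul_le_eIntegral_restrict_rnDeriv hbot hQ hA0.ne') hAc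

end Divergence

section Tilt

variable {Ω : Type*} [MeasurableSpace Ω] {φ : ℝ → EReal}

lemma withDensity_apply_of_eqOn_const {ℙ : Measure Ω} [IsFiniteMeasure ℙ] {f : Ω → ℝ≥0∞}
    {B : Set Ω} (hB : MeasurableSet B) {c : ℝ} (hc : 0 ≤ c)
    (hfB : EqOn f (fun _ ↦ ENNReal.ofReal c) B) :
    ℙ.withDensity f B = ENNReal.ofReal (c * ℙ.real B) := by
  rw [withDensity_apply _ hB, setLIntegral_congr_fun hB hfB, setLIntegral_const,
    ENNReal.ofReal_mul hc, ofReal_measureReal]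

lemma exists_eIntegral_rnDeriv_eq_bernoulliDivergence (hbot : ∀ x, 0 ≤ x → φ x ≠ ⊥)
    {ℙ : Measure Ω} [IsProbabilityMeasure ℙ] {A : Set Ω} (hA : MeasurableSet A)
    (hA0 : 0 < ℙ.real A) (hA1 : ℙ.real A < 1) {t : ℝ} (ht : t ∈ Icc 0 1) :
    ∃ Q : Measure Ω, IsProbabilityMeasure Q ∧ Q ≪ ℙ ∧ Q.real A = t ∧
      eIntegral ℙ (fun ω ↦ φ ((Q.rnDeriv ℙ ω).toReal)) = bernoulliDivergence φ (ℙ.real A) t := by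
  classical
  set p := ℙ.real A
  have hp1 : 0 < 1 - p := sub_pos.2 hA1
  have hr : 0 ≤ t / p := div_nonneg ht.1 hA0.le
  have hs : 0 ≤ (1 - t) / (1 - p) := div_nonneg (sub_nonneg.2 ht.2) hp1.le
  set f : Ω → ℝ≥0∞ := A.piecewise (fun _ ↦ ENNReal.ofReal (t / p))
    (fun _ ↦ ENNReal.ofReal ((1 - t) / (1 - p)))
  have hfA : EqOn f (fun _ ↦ ENNReal.ofReal (t / p)) A := fun _ ↦ Set.piecewise_eq_of_mem _ _ _
  have hfAc : EqOn f (fun _ ↦ ENNReal.ofReal ((1 - t) / (1 - p))) Aᶜ :=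
    fun _ ↦ Set.piecewise_eq_of_notMem _ _ _
  set Q := ℙ.withDensity f
  have hQA : Q A = ENNReal.ofReal t := by
    rw [withDensity_apply_of_eqOn_const hA hr hfA, div_mul_cancel₀ _ hA0.ne']
  have hQAc : Q Aᶜ = ENNReal.ofReal (1 - t) := by
    rw [withDensity_apply_of_eqOn_const hA.compl hs hfAc, probReal_compl_eq_one_sub hA,
      div_mul_cancel₀ _ hp1.ne']
  have hQ : IsProbabilityMeasure Q := ⟨by
    rw [← measure_add_measure_compl hA, hQA, hQAc, ← ENNReal.ofReal_add ht.1 (sub_nonneg.2 ht.2),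
      add_sub_cancel, ENNReal.ofReal_one]⟩
  have hrn : Q.rnDeriv ℙ =ᵐ[ℙ] f :=
    Measure.rnDeriv_withDensity ℙ (Measurable.piecewise hA measurable_const measurable_const)
  have hrnA : ∀ᵐ ω ∂ℙ.restrict A, (Q.rnDeriv ℙ ω).toReal = t / p := by
    filter_upwards [ae_restrict_of_ae hrn, ae_restrict_mem hA] with ω h hω
    rw [h, hfA hω, ENNReal.toReal_ofReal hr]
  have hrnAc : ∀ᵐ ω ∂ℙ.restrict Aᶜ, (Q.rnDeriv ℙ ω).toReal = (1 - t) / (1 - p) := by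
    filter_upwards [ae_restrict_of_ae hrn, ae_restrict_mem hA.compl] with ω h hω
    rw [h, hfAc hω, ENNReal.toReal_ofReal hs]
  refine ⟨Q, hQ, withDensity_absolutelyContinuous ℙ f,
    by rw [measureReal_def, hQA, ENNReal.toReal_ofReal ht.1], ?_⟩
  rw [eIntegral_add_compl hA, eIntegral_congr_ae (hrnA.mono fun _ ↦ congrArg φ),
    eIntegral_congr_ae (hrnAc.mono fun _ ↦ congrArg φ), eIntegral_const (hbot _ hr),
    eIntegral_const (hbot _ hs), measureReal_restrict_apply_univ, measureReal_restrict_apply_univ,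
    probReal_compl_eq_one_sub hA]
  rfl

end Tilt

theorem stmt_9_general {Ω : Type*} [MeasurableSpace Ω] (ℙ : Measure Ω) [IsProbabilityMeasure ℙ]
    (φ : ℝ → EReal)
    (hconv : ∀ a ∈ Ici (0 : ℝ), ∀ b ∈ Ici (0 : ℝ), ∀ t ∈ Icc (0 : ℝ) 1,
      φ (t * a + (1 - t) * b) ≤ (t : EReal) * φ a + ((1 - t : ℝ) : EReal) * φ b)
    (hφ1 : φ 1 = 0)
    (δ : ℝ) (hδ : 0 < δ)
    (A : Set Ω) (hA : MeasurableSet A)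
    (hA0 : 0 < (ℙ A).toReal) (hA1 : (ℙ A).toReal < 1) :
    (⨆ Q ∈ {Q : Measure Ω | IsProbabilityMeasure Q ∧ Q ≪ ℙ ∧
        eIntegral ℙ (fun ω => φ ((Q.rnDeriv ℙ ω).toReal)) ≤ (δ : EReal)},
      (Q A).toReal) =
    sSup {t : ℝ | t ∈ Icc ((ℙ A).toReal) 1 ∧
      (((ℙ A).toReal : ℝ) : EReal) * φ (t / (ℙ A).toReal) +
        ((1 - (ℙ A).toReal : ℝ) : EReal) * φ ((1 - t) / (1 - (ℙ A).toReal)) ≤ (δ : EReal)} := by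
  have hφ : EConvexOnNonneg φ := hconv
  have hbot : ∀ x, 0 ≤ x → φ x ≠ ⊥ := fun x ↦ hφ.ne_bot (by simp [hφ1])
  set S := {t : ℝ | t ∈ Icc ((ℙ A).toReal) 1 ∧ bernoulliDivergence φ (ℙ A).toReal t ≤ δ}
  have hpS : (ℙ A).toReal ∈ S := ⟨⟨le_rfl, hA1.le⟩, by
    simp [bernoulliDivergence, hA0.ne', (sub_pos.2 hA1).ne', hφ1, hδ.le]⟩
  have hSbdd : BddAbove S := ⟨1, fun t ht ↦ ht.1.2⟩
  have hS0 : 0 ≤ sSup S := hA0.le.trans (le_csSup hSbdd hpS)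
  refine le_antisymm (Real.iSup_le (fun Q ↦ Real.iSup_le (fun ⟨hQ, hQac, hQdiv⟩ ↦ ?_) hS0) hS0)
    (csSup_le ⟨_, hpS⟩ fun t ht ↦ ?_)
  · rcases le_total (Q A).toReal (ℙ A).toReal with hle | hge
    · exact hle.trans (le_csSup hSbdd hpS)
    · exact le_csSup hSbdd ⟨⟨hge, measureReal_le_one⟩,
        (hφ.bernoulliDivergence_le_eIntegral_rnDeriv hbot hQac hA hA0 hA1).trans hQdiv⟩
  · obtain ⟨Q, hQ, hQac, rfl, hQdiv⟩ := exists_eIntegral_rnDeriv_eq_bernoulliDivergence hbot hA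
      hA0 hA1 ⟨hA0.le.trans ht.1.1, ht.1.2⟩
    refine le_ciSup₂ (f := fun Q (_ : IsProbabilityMeasure Q ∧ _) ↦ (Q A).toReal) ?_ Q
      ⟨hQ, hQac, hQdiv ▸ ht.2⟩
    refine ⟨1, ?_⟩
    rintro _ ⟨_, ⟨Q', rfl⟩, ⟨⟨hQ', -⟩, rfl⟩⟩
    exact measureReal_le_one

/-- The worst-case probability of an event `A` over the φ-divergence ball
`𝓟_φ(ℙ,δ)` equals `sup {t ∈ [ℙ(A),1] : ℙ(A)φ(t/ℙ(A)) + (1-ℙ(A))φ((1-t)/(1-ℙ(A))) ≤ δ}`. -/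
theorem stmt_9 {Ω : Type*} [MeasurableSpace Ω] (ℙ : Measure Ω) [IsProbabilityMeasure ℙ]
    (φ : ℝ → EReal)
    (hconv : ∀ a ∈ Ici (0 : ℝ), ∀ b ∈ Ici (0 : ℝ), ∀ t ∈ Icc (0 : ℝ) 1,
      φ (t * a + (1 - t) * b) ≤ (t : EReal) * φ a + ((1 - t : ℝ) : EReal) * φ b)
    (hφ1 : φ 1 = 0)
    (hφ0 : Tendsto φ (nhdsWithin 0 (Ioi 0)) (nhds (φ 0)))
    (δ : ℝ) (hδ : 0 < δ)
    (A : Set Ω) (hA : MeasurableSet A)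
    (hA0 : 0 < (ℙ A).toReal) (hA1 : (ℙ A).toReal < 1) :
    (⨆ Q ∈ {Q : Measure Ω | IsProbabilityMeasure Q ∧ Q ≪ ℙ ∧
        eIntegral ℙ (fun ω => φ ((Q.rnDeriv ℙ ω).toReal)) ≤ (δ : EReal)},
      (Q A).toReal) =
    sSup {t : ℝ | t ∈ Icc ((ℙ A).toReal) 1 ∧
      (((ℙ A).toReal : ℝ) : EReal) * φ (t / (ℙ A).toReal) +
        ((1 - (ℙ A).toReal : ℝ) : EReal) * φ ((1 - t) / (1 - (ℙ A).toReal)) ≤ (δ : EReal)} :=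
  stmt_9_general ℙ φ hconv hφ1 δ hδ A hA hA0 hA1
end

section
/- For the chi-squared divergence φ(x) = (x−1)², δ > 0, the function g_{φ,δ}(x) = sup{t ∈ [x,1] : x·φ(t/x) + (1−x)·φ((1−t)/(1−x)) ≤ δ} satisfies: x_δ = 1/(1+δ), and g_{φ,δ}(x) = x + √(δ·x·(1−x)) for x ∈ (0, x_δ). -/
open Set

/-- The distorted probability function `g_{φ,δ}` arising from φ-divergence balls. -/
noncomputable def gphi (φ : ℝ → ℝ) (δ x : ℝ) : ℝ :=
  if x = 0 then 0 else if x = 1 then 1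
  else sSup {t : ℝ | t ∈ Icc x 1 ∧ x * φ (t / x) + (1 - x) * φ ((1 - t) / (1 - x)) ≤ δ}

/-- For the chi-squared divergence `φ(x) = (x-1)²`: `x_δ = 1/(1+δ)` (i.e. it solves
`x φ(1/x) + (1-x) φ(0) = δ`), and `g_{φ,δ}(x) = x + √(δ x (1-x))` on `(0, x_δ)`. -/
theorem stmt_11 (δ : ℝ) (hδ : 0 < δ) :
    let φ : ℝ → ℝ := fun x => (x - 1) ^ 2
    (1 / (1 + δ)) * φ (1 / (1 / (1 + δ))) + (1 - 1 / (1 + δ)) * φ 0 = δ ∧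
    ∀ x ∈ Ioo (0 : ℝ) (1 / (1 + δ)),
      gphi φ δ x = x + Real.sqrt (δ * x * (1 - x)) := by
  intro φ
  have hδ1 : (0:ℝ) < 1 + δ := by linarith
  constructor
  · show (1 / (1 + δ)) * ((1 / (1 / (1 + δ)) - 1) ^ 2) + (1 - 1 / (1 + δ)) * ((0 - 1) ^ 2) = δ
    field_simp
    ring
  · intro x hx
    obtain ⟨hx0, hx1⟩ := hx
    have hxd : x * (1 + δ) < 1 := by rwa [lt_div_iff₀ hδ1] at hx1
    have hx1' : x < 1 := by nlinarith
    have hxne0 : x ≠ 0 := ne_of_gt hx0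
    have hxne1 : x ≠ 1 := ne_of_lt hx1'
    set s := Real.sqrt (δ * x * (1 - x)) with hs
    have hpos : 0 < δ * x * (1 - x) := by
      have h1x : 0 < 1 - x := by linarith
      positivity
    have hs0 : 0 < s := Real.sqrt_pos.mpr hpos
    have hs2 : s ^ 2 = δ * x * (1 - x) := Real.sq_sqrt hpos.le
    have hsle : x + s ≤ 1 := by
      have hle : s ≤ 1 - x := by
        calc s ≤ Real.sqrt ((1 - x) ^ 2) := Real.sqrt_le_sqrt (by nlinarith)
          _ = 1 - x := Real.sqrt_sq (by linarith)
      linarith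
    have hset : {t : ℝ | t ∈ Icc x 1 ∧ x * φ (t / x) + (1 - x) * φ ((1 - t) / (1 - x)) ≤ δ}
        = Icc x (x + s) := by
      ext t
      simp only [mem_setOf_eq, mem_Icc, φ]
      have he : x * (t / x - 1) ^ 2 + (1 - x) * ((1 - t) / (1 - x) - 1) ^ 2
          = (t - x) ^ 2 / (x * (1 - x)) := by
        have h1x : (1:ℝ) - x ≠ 0 := sub_ne_zero.mpr (Ne.symm hxne1)
        rw [eq_div_iff (by positivity)]
        field_simp
        ring
      have hx1x : 0 < x * (1 - x) := by nlinarith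
      constructor
      · rintro ⟨⟨h1, h2⟩, h3⟩
        refine ⟨h1, ?_⟩
        rw [he, div_le_iff₀ hx1x] at h3
        nlinarith
      · rintro ⟨h1, h2⟩
        refine ⟨⟨h1, by linarith⟩, ?_⟩
        rw [he, div_le_iff₀ hx1x]
        nlinarith
    rw [gphi, if_neg hxne0, if_neg hxne1, hset, csSup_Icc (by linarith)]
end

section
/- Let ℙ be an atomless probability measure, Y₁ ≤ Y₂ nonnegative random variables with E^ℙ[Y₁] < 1 < E^ℙ[Y₂] < ∞, and 𝓟(ℙ,Y₁,Y₂) = {ℚ ≪ ℙ : Y₁ ≤ dℚ/dℙ ≤ Y₂}. For A ∈ 𝓕: if E^ℙ[Y₂·1_A + Y₁·1_{Aᶜ}] ≤ 1 then sup_{ℚ ∈ 𝓟(ℙ,Y₁,Y₂)} ℚ(A) = E^ℙ[Y₂·1_A]; if E^ℙ[Y₂·1_A + Y₁·1_{Aᶜ}] > 1, then for any measurable B ⊆ A with E^ℙ[Y₂·1_B + Y₁·1_{Bᶜ}] = 1, sup_{ℚ ∈ 𝓟(ℙ,Y₁,Y₂)} ℚ(A) = E^ℙ[Y₂·1_B +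 Y₁·1_{A∖B}]. -/
open Set MeasureTheory

/-! Every admissible `Q` satisfies `Q A ≤ ∫_A Y₂` and `Q A = 1 - Q Aᶜ ≤ 1 - ∫_{Aᶜ} Y₁`. Each
bound is attained by `Q = Z • ℙ` for a density `Y₁ ≤ Z ≤ Y₂` of mass one: in the first case
`Z = Y₂` on `A` and `Z = Y₁ + t (Y₂ - Y₁)` on `Aᶜ`, with `t ∈ [0, 1]` fixed by `∫ Z = 1`; in
the second case `Z = Y₂` on `B` and `Z = Y₁` off `B`, which gives `∫_A Z = 1 - ∫_{Aᶜ} Y₁`. -/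

-- The junk value `⨆ _ : x ∈ S, f x = 0` for `x ∉ S` takes part in the supremum, hence `0 ≤ r`.
lemma Real.biSup_eq_of_forall_le {α : Type*} {S : Set α} {f : α → ℝ} {r : ℝ} {x₀ : α}
    (hx₀ : x₀ ∈ S) (hfx₀ : f x₀ = r) (hle : ∀ x ∈ S, f x ≤ r) (hr : 0 ≤ r) :
    ⨆ x ∈ S, f x = r := by
  refine le_antisymm (Real.iSup_le (fun x => Real.iSup_le (hle x) hr) hr) ?_
  have hbdd : BddAbove (range fun x => ⨆ _ : x ∈ S, f x) :=
    ⟨r, forall_mem_range.2 fun x => Real.iSup_le (hle x) hr⟩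
  calc r = ⨆ _ : x₀ ∈ S, f x₀ := by rw [ciSup_pos hx₀, hfx₀]
    _ ≤ ⨆ x ∈ S, f x := le_ciSup hbdd x₀

namespace MeasureTheory

variable {Ω : Type*} [MeasurableSpace Ω] {μ Q : Measure Ω} {Y₁ Y₂ Z : Ω → ℝ} {s : Set Ω}

lemma toReal_withDensity_ofReal_apply (hZ0 : 0 ≤ Z) (hZint : Integrable Z μ)
    (hs : MeasurableSet s) :
    (μ.withDensity (fun ω => ENNReal.ofReal (Z ω)) s).toReal = ∫ ω in s, Z ω ∂μ := by
  rw [withDensity_apply _ hs,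
    ← ofReal_integral_eq_lintegral_ofReal hZint.restrict (ae_of_all _ hZ0),
    ENNReal.toReal_ofReal (setIntegral_nonneg hs fun ω _ => hZ0 ω)]

/-- The set `𝓟(μ, Y₁, Y₂)` of the paper. -/
def densityBand (μ : Measure Ω) (Y₁ Y₂ : Ω → ℝ) : Set (Measure Ω) :=
  {Q | IsProbabilityMeasure Q ∧ Q ≪ μ ∧
    ∀ᵐ ω ∂μ, Y₁ ω ≤ (Q.rnDeriv μ ω).toReal ∧ (Q.rnDeriv μ ω).toReal ≤ Y₂ ω}

section SigmaFinite

variable [SigmaFinite μ]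

lemma setIntegral_le_toReal_apply_of_mem_densityBand (hY₁ : Integrable Y₁ μ)
    (hQ : Q ∈ densityBand μ Y₁ Y₂) (s : Set Ω) : ∫ ω in s, Y₁ ω ∂μ ≤ (Q s).toReal := by
  obtain ⟨_, hQμ, hQY⟩ := hQ
  rw [← measureReal_def, ← Measure.setIntegral_toReal_rnDeriv hQμ s]
  exact integral_mono_ae hY₁.restrict Measure.integrable_toReal_rnDeriv.restrict
    (ae_restrict_of_ae (hQY.mono fun _ h => h.1))

lemma toReal_apply_le_setIntegral_of_mem_densityBand (hY₂ : Integrable Y₂ μ)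
    (hQ : Q ∈ densityBand μ Y₁ Y₂) (s : Set Ω) : (Q s).toReal ≤ ∫ ω in s, Y₂ ω ∂μ := by
  obtain ⟨_, hQμ, hQY⟩ := hQ
  rw [← measureReal_def, ← Measure.setIntegral_toReal_rnDeriv hQμ s]
  exact integral_mono_ae Measure.integrable_toReal_rnDeriv.restrict hY₂.restrict
    (ae_restrict_of_ae (hQY.mono fun _ h => h.2))

lemma toReal_apply_le_one_sub_setIntegral_compl_of_mem_densityBand (hY₁ : Integrable Y₁ μ)
    (hQ : Q ∈ densityBand μ Y₁ Y₂) (hs : MeasurableSet s) :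
    (Q s).toReal ≤ 1 - ∫ ω in sᶜ, Y₁ ω ∂μ := by
  have := hQ.1
  have hcompl := setIntegral_le_toReal_apply_of_mem_densityBand hY₁ hQ sᶜ
  rw [prob_compl_eq_one_sub hs, ENNReal.toReal_sub_of_le prob_le_one ENNReal.one_ne_top,
    ENNReal.toReal_one] at hcompl
  linarith

lemma withDensity_ofReal_mem_densityBand (hY₁ : 0 ≤ Y₁) (hY₁Z : Y₁ ≤ Z) (hZY₂ : Z ≤ Y₂)
    (hZ : Measurable Z) (hZint : Integrable Z μ) (hZ1 : ∫ ω, Z ω ∂μ = 1) :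
    μ.withDensity (fun ω => ENNReal.ofReal (Z ω)) ∈ densityBand μ Y₁ Y₂ := by
  have hZ0 : 0 ≤ Z := hY₁.trans hY₁Z
  refine ⟨⟨?_⟩, withDensity_absolutelyContinuous _ _, ?_⟩
  · rw [withDensity_apply _ MeasurableSet.univ, Measure.restrict_univ,
      ← ofReal_integral_eq_lintegral_ofReal hZint (ae_of_all _ hZ0), hZ1, ENNReal.ofReal_one]
  · filter_upwards [Measure.rnDeriv_withDensity μ hZ.ennreal_ofReal] with ω hω
    rw [hω, ENNReal.toReal_ofReal (hZ0 ω)]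
    exact ⟨hY₁Z ω, hZY₂ ω⟩

lemma biSup_toReal_apply_densityBand_eq (hY₁ : 0 ≤ Y₁) (hY₁Z : Y₁ ≤ Z)
    (hZY₂ : Z ≤ Y₂) (hZ : Measurable Z) (hZint : Integrable Z μ) (hZ1 : ∫ ω, Z ω ∂μ = 1)
    (hs : MeasurableSet s)
    (hub : ∀ Q ∈ densityBand μ Y₁ Y₂, (Q s).toReal ≤ ∫ ω in s, Z ω ∂μ) :
    ⨆ Q ∈ densityBand μ Y₁ Y₂, (Q s).toReal = ∫ ω in s, Z ω ∂μ :=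
  Real.biSup_eq_of_forall_le (withDensity_ofReal_mem_densityBand hY₁ hY₁Z hZY₂ hZ hZint hZ1)
    (toReal_withDensity_ofReal_apply (hY₁.trans hY₁Z) hZint hs) hub
    (setIntegral_nonneg hs fun ω _ => hY₁.trans hY₁Z ω)

end SigmaFinite

lemma exists_measurable_eqOn_integral_eq_one (hY₁m : Measurable Y₁) (hY₂m : Measurable Y₂)
    (hY₁ : Integrable Y₁ μ) (hY₂ : Integrable Y₂ μ) (hle : Y₁ ≤ Y₂)
    (hs : MeasurableSet s) (hs₁ : ∫ ω in s, Y₂ ω ∂μ + ∫ ω in sᶜ, Y₁ ω ∂μ ≤ 1)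
    (hY₂₁ : 1 < ∫ ω, Y₂ ω ∂μ) :
    ∃ Z, Measurable Z ∧ Y₁ ≤ Z ∧ Z ≤ Y₂ ∧ EqOn Z Y₂ s ∧ ∫ ω, Z ω ∂μ = 1 := by
  classical
  set a := ∫ ω in s, Y₂ ω ∂μ
  set b₁ := ∫ ω in sᶜ, Y₁ ω ∂μ
  set b₂ := ∫ ω in sᶜ, Y₂ ω ∂μ
  have hab₂ : a + b₂ = ∫ ω, Y₂ ω ∂μ := integral_add_compl hs hY₂
  have hb : 0 < b₂ - b₁ := by linarith
  set t := (1 - (a + b₁)) / (b₂ - b₁)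
  have ht₀ : 0 ≤ t := div_nonneg (by linarith) hb.le
  have ht₁ : t ≤ 1 := (div_le_one hb).2 (by linarith)
  refine ⟨s.piecewise Y₂ (fun ω => Y₁ ω + t * (Y₂ ω - Y₁ ω)),
    hY₂m.piecewise hs (hY₁m.add (measurable_const.mul (hY₂m.sub hY₁m))),
    le_piecewise (fun ω _ => hle ω)
      (fun ω _ => le_add_of_nonneg_right (mul_nonneg ht₀ (sub_nonneg.2 (hle ω)))),
    piecewise_le (fun ω _ => le_rfl)
      (fun ω _ => by nlinarith [hle ω]),
    fun ω hω => piecewise_eq_of_mem _ _ _ hω, ?_⟩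
  rw [integral_piecewise (g := fun ω => Y₁ ω + t * (Y₂ ω - Y₁ ω)) hs hY₂.integrableOn
      (hY₁.add ((hY₂.sub hY₁).const_mul t)).integrableOn,
    integral_add (g := fun ω => t * (Y₂ ω - Y₁ ω)) hY₁.integrableOn
      ((hY₂.sub hY₁).const_mul t).integrableOn,
    integral_const_mul, integral_sub hY₂.integrableOn hY₁.integrableOn]
  change a + (b₁ + t * (b₂ - b₁)) = 1
  rw [div_mul_cancel₀ _ hb.ne']
  ring

lemma setIntegral_piecewise_of_subset [DecidablePred (· ∈ s)] {t : Set Ω}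
    (hs : MeasurableSet s) (hst : s ⊆ t) (hY₁ : Integrable Y₁ μ) (hY₂ : Integrable Y₂ μ) :
    ∫ ω in t, s.piecewise Y₂ Y₁ ω ∂μ = ∫ ω in s, Y₂ ω ∂μ + ∫ ω in t \ s, Y₁ ω ∂μ := by
  rw [integral_piecewise (μ := μ.restrict t) hs hY₂.restrict.integrableOn
    hY₁.restrict.integrableOn, Measure.restrict_restrict hs,
    Measure.restrict_restrict hs.compl, inter_eq_left.2 hst, inter_comm, ← sdiff_eq]

end MeasureTheory

theorem stmt_13_general {Ω : Type*} [MeasurableSpace Ω] (ℙ : Measure Ω)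
    [IsProbabilityMeasure ℙ]
    (Y₁ Y₂ : Ω → ℝ) (hY₁meas : Measurable Y₁) (hY₂meas : Measurable Y₂)
    (hY₁pos : ∀ ω, 0 ≤ Y₁ ω) (hle : ∀ ω, Y₁ ω ≤ Y₂ ω)
    (hY₁int : Integrable Y₁ ℙ) (hY₂int : Integrable Y₂ ℙ)
    (hEY₂ : 1 < ∫ ω, Y₂ ω ∂ℙ)
    (A : Set Ω) (hA : MeasurableSet A) :
    let Pset : Set (Measure Ω) := {Q | IsProbabilityMeasure Q ∧ Q ≪ ℙ ∧
      ∀ᵐ ω ∂ℙ, Y₁ ω ≤ (Q.rnDeriv ℙ ω).toReal ∧ (Q.rnDeriv ℙ ω).toReal ≤ Y₂ ω}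
    ((∫ ω in A, Y₂ ω ∂ℙ + ∫ ω in Aᶜ, Y₁ ω ∂ℙ ≤ 1) →
      (⨆ Q ∈ Pset, (Q A).toReal) = ∫ ω in A, Y₂ ω ∂ℙ) ∧
    ((1 < ∫ ω in A, Y₂ ω ∂ℙ + ∫ ω in Aᶜ, Y₁ ω ∂ℙ) →
      ∀ B : Set Ω, MeasurableSet B → B ⊆ A →
        (∫ ω in B, Y₂ ω ∂ℙ + ∫ ω in Bᶜ, Y₁ ω ∂ℙ = 1) →
        (⨆ Q ∈ Pset, (Q A).toReal) = ∫ ω in B, Y₂ ω ∂ℙ + ∫ ω in A \ B, Y₁ ω ∂ℙ) := by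
  classical
  refine ⟨fun hA₁ => ?_, fun _ B hB hBA hB₁ => ?_⟩
  · obtain ⟨Z, hZ, hY₁Z, hZY₂, hZA, hZ1⟩ :=
      exists_measurable_eqOn_integral_eq_one hY₁meas hY₂meas hY₁int hY₂int hle hA hA₁ hEY₂
    have hZint : Integrable Z ℙ := integrable_of_le_of_le hZ.aestronglyMeasurable
      (ae_of_all _ hY₁Z) (ae_of_all _ hZY₂) hY₁int hY₂int
    have hZA' : ∫ ω in A, Z ω ∂ℙ = ∫ ω in A, Y₂ ω ∂ℙ := setIntegral_congr_fun hA hZA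
    rw [← hZA']
    exact biSup_toReal_apply_densityBand_eq hY₁pos hY₁Z hZY₂ hZ hZint hZ1 hA fun Q hQ =>
      hZA' ▸ toReal_apply_le_setIntegral_of_mem_densityBand hY₂int hQ A
  · set Z := B.piecewise Y₂ Y₁
    have hZ : Measurable Z := hY₂meas.piecewise hB hY₁meas
    have hY₁Z : Y₁ ≤ Z := le_piecewise (fun ω _ => hle ω) fun ω _ => le_rfl
    have hZY₂ : Z ≤ Y₂ := piecewise_le (fun ω _ => le_rfl) fun ω _ => hle ω
    have hZint : Integrable Z ℙ := integrable_of_le_of_le hZ.aestronglyMeasurable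
      (ae_of_all _ hY₁Z) (ae_of_all _ hZY₂) hY₁int hY₂int
    have hZ1 : ∫ ω, Z ω ∂ℙ = 1 := by
      rw [integral_piecewise hB hY₂int.integrableOn hY₁int.integrableOn, hB₁]
    have hZA : ∫ ω in A, Z ω ∂ℙ = 1 - ∫ ω in Aᶜ, Y₁ ω ∂ℙ := by
      have hZAc : ∫ ω in Aᶜ, Z ω ∂ℙ = ∫ ω in Aᶜ, Y₁ ω ∂ℙ := setIntegral_congr_fun hA.compl
        fun ω hω => piecewise_eq_of_notMem _ _ _ fun h => hω (hBA h)
      rw [← hZAc, ← hZ1, ← integral_add_compl hA hZint]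
      ring
    rw [← setIntegral_piecewise_of_subset hB hBA hY₁int hY₂int]
    exact biSup_toReal_apply_densityBand_eq hY₁pos hY₁Z hZY₂ hZ hZint hZ1 hA fun Q hQ =>
      hZA ▸ toReal_apply_le_one_sub_setIntegral_compl_of_mem_densityBand hY₁int hQ hA

/-- Worst-case probability of an event under likelihood-ratio constraints
`Y₁ ≤ dQ/dℙ ≤ Y₂`: if `E[Y₂ 1_A + Y₁ 1_{Aᶜ}] ≤ 1` it equals `E[Y₂ 1_A]`; otherwise,
for any measurable `B ⊆ A` with `E[Y₂ 1_B + Y₁ 1_{Bᶜ}] = 1`, it equals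
`E[Y₂ 1_B + Y₁ 1_{A∖B}]`. -/
theorem stmt_13 {Ω : Type*} [MeasurableSpace Ω] (ℙ : Measure Ω)
    [IsProbabilityMeasure ℙ] [NullSingletonClass ℙ]
    (Y₁ Y₂ : Ω → ℝ) (hY₁meas : Measurable Y₁) (hY₂meas : Measurable Y₂)
    (hY₁pos : ∀ ω, 0 ≤ Y₁ ω) (hle : ∀ ω, Y₁ ω ≤ Y₂ ω)
    (hY₁int : Integrable Y₁ ℙ) (hY₂int : Integrable Y₂ ℙ)
    (hEY₁ : ∫ ω, Y₁ ω ∂ℙ < 1) (hEY₂ : 1 < ∫ ω, Y₂ ω ∂ℙ)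
    (A : Set Ω) (hA : MeasurableSet A) :
    let Pset : Set (Measure Ω) := {Q | IsProbabilityMeasure Q ∧ Q ≪ ℙ ∧
      ∀ᵐ ω ∂ℙ, Y₁ ω ≤ (Q.rnDeriv ℙ ω).toReal ∧ (Q.rnDeriv ℙ ω).toReal ≤ Y₂ ω}
    ((∫ ω in A, Y₂ ω ∂ℙ + ∫ ω in Aᶜ, Y₁ ω ∂ℙ ≤ 1) →
      (⨆ Q ∈ Pset, (Q A).toReal) = ∫ ω in A, Y₂ ω ∂ℙ) ∧
    ((1 < ∫ ω in A, Y₂ ω ∂ℙ + ∫ ω in Aᶜ, Y₁ ω ∂ℙ) →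
      ∀ B : Set Ω, MeasurableSet B → B ⊆ A →
        (∫ ω in B, Y₂ ω ∂ℙ + ∫ ω in Bᶜ, Y₁ ω ∂ℙ = 1) →
        (⨆ Q ∈ Pset, (Q A).toReal) = ∫ ω in B, Y₂ ω ∂ℙ + ∫ ω in A \ B, Y₁ ω ∂ℙ) :=
  stmt_13_general ℙ Y₁ Y₂ hY₁meas hY₂meas hY₁pos hle hY₁int hY₂int hEY₂ A hA
end

section
/- Let ρ_i (i = 1,…,n) be risk measures induced by families of downsets {𝓐_x^{(i)}}_{x∈ℝ}, i.e., ρ_i(X) = inf{x ∈ ℝ : {X > x} ∈ 𝓐_x^{(i)}}, and assume each ρ_i takes values in [−∞,∞). Define 𝓐̃_x = ⋃_{y₁+⋯+y_n = x} { A₁ ∪ ⋯ ∪ A_n : A_i ∈ 𝓐^{(i)}_{y_i} }. Then the inf-convolution satisfies: inf{ Σ_{i=1}^n ρ_i(X_i) : X₁ + ⋯ + X_n = X } = inf{ x ∈ ℝ : {X > x} ∈ 𝓐̃_x }. -/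
/-!
Given a decomposition `x = ∑ yᵢ` and sets `Aᵢ ∈ 𝓐^{(i)}_{yᵢ}` covering `{X > x}`, the allocation
that gives `yᵢ` to every agent and hands the excess `X - x` at `ω` to one agent `i` with `ω ∈ Aᵢ`
has `{Xᵢ > yᵢ} ⊆ Aᵢ`, hence `∑ ρᵢ(Xᵢ) ≤ x`. Conversely, for any allocation and any `yᵢ` with
`{Xᵢ > yᵢ} ∈ 𝓐^{(i)}_{yᵢ}`, the sets `{Xᵢ > yᵢ} ∩ {X > ∑ yⱼ}` cover `{X > ∑ yⱼ}`, so `∑ yᵢ` is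
admissible for `𝓐̃`; taking infima over the `yᵢ` separately is legitimate because no `ρᵢ` is `+∞`,
so no `⊥ + ⊤` arises in the sum.
-/

open Set

/-- The risk measure induced by a family of downsets `𝓐_x`:
`ρ(X) = inf {x ∈ ℝ : {X > x} ∈ 𝓐_x}`, valued in the extended reals. -/
noncomputable def indRM {Ω : Type*} (𝓐 : ℝ → Set (Set Ω)) (X : Ω → ℝ) : EReal :=
  sInf ((fun x : ℝ => (x : EReal)) '' {x : ℝ | {ω | x < X ω} ∈ 𝓐 x})

namespace EReal

theorem coe_finset_sum {ι : Type*} (s : Finset ι) (y : ι → ℝ) :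
    ((∑ i ∈ s, y i : ℝ) : EReal) = ∑ i ∈ s, (y i : EReal) :=
  map_sum (⟨⟨Real.toEReal, coe_zero⟩, coe_add⟩ : ℝ →+ EReal) y s

theorem finset_sum_ne_top {ι : Type*} {s : Finset ι} {f : ι → EReal} (hf : ∀ i ∈ s, f i ≠ ⊤) :
    ∑ i ∈ s, f i ≠ ⊤ :=
  Finset.sum_induction f (· ≠ ⊤) (fun _ _ => add_ne_top) zero_ne_top hf

theorem exists_lt_lt_add_eq_of_add_lt {a b : EReal} (ha : a ≠ ⊤) (hb : b ≠ ⊤) {r : ℝ}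
    (h : a + b < r) : ∃ p q : ℝ, a < p ∧ b < q ∧ p + q = r := by
  have hb_lt : b < r - a := (EReal.lt_sub_iff_add_lt (.inr hb) (.inl ha)).2 (by rwa [add_comm])
  obtain ⟨q, hbq, hq⟩ := exists_between_coe_real hb_lt
  have ha_lt : a < r - q := by
    rw [EReal.lt_sub_iff_add_lt (.inl (coe_ne_bot q)) (.inl (coe_ne_top q)), add_comm]
    exact (EReal.lt_sub_iff_add_lt (.inr (coe_ne_top q)) (.inl ha)).1 hq
  exact ⟨r - q, q, by exact_mod_cast ha_lt, hbq, _root_.sub_add_cancel r q⟩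

theorem exists_lt_finset_sum_lt {ι : Type*} [DecidableEq ι] (s : Finset ι) {f : ι → EReal}
    (hf : ∀ i ∈ s, f i ≠ ⊤) {r : ℝ} (h : ∑ i ∈ s, f i < r) :
    ∃ c : ι → ℝ, (∀ i ∈ s, f i < c i) ∧ ∑ i ∈ s, c i < r := by
  induction s using Finset.induction_on generalizing r with
  | empty => exact ⟨0, by simp, by simpa using h⟩
  | insert a s ha ih =>
    rw [Finset.forall_mem_insert] at hf
    rw [Finset.sum_insert ha] at h
    obtain ⟨p, q, hp, hq, rfl⟩ :=
      exists_lt_lt_add_eq_of_add_lt hf.1 (finset_sum_ne_top hf.2) h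
    obtain ⟨c, hc, hcq⟩ := ih hf.2 hq
    have hupdate : ∀ i ∈ s, Function.update c a p i = c i := fun i hi =>
      Function.update_of_ne (ne_of_mem_of_not_mem hi ha) p c
    refine ⟨Function.update c a p, ?_, ?_⟩
    · rw [Finset.forall_mem_insert, Function.update_self]
      exact ⟨hp, fun i hi => hupdate i hi ▸ hc i hi⟩
    · rw [Finset.sum_insert ha, Function.update_self, Finset.sum_congr rfl hupdate]
      linarith

theorem le_sum_sInf_image_coe {ι : Type*} [Fintype ι] {S : ι → Set ℝ}
    (hS : ∀ i, sInf (Real.toEReal '' S i) ≠ ⊤) {b : EReal}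
    (h : ∀ y : ι → ℝ, (∀ i, y i ∈ S i) → b ≤ ((∑ i, y i : ℝ) : EReal)) :
    b ≤ ∑ i, sInf (Real.toEReal '' S i) := by
  classical
  by_contra! hlt
  obtain ⟨r, hr, hrb⟩ := exists_between_coe_real hlt
  obtain ⟨c, hc, hcr⟩ := exists_lt_finset_sum_lt Finset.univ (fun i _ => hS i) hr
  have hy : ∀ i, ∃ y ∈ S i, y < c i := fun i => by
    obtain ⟨_, ⟨y, hy, rfl⟩, hyc⟩ := sInf_lt_iff.1 (hc i (Finset.mem_univ i))
    exact ⟨y, hy, EReal.coe_lt_coe_iff.1 hyc⟩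
  choose y hyS hyc using hy
  have hyr : ∑ i, y i < r := (Finset.sum_le_sum fun i _ => (hyc i).le).trans_lt hcr
  exact lt_asymm ((h y hyS).trans_lt (EReal.coe_lt_coe_iff.2 hyr)) hrb

end EReal

section RiskMeasure

variable {Ω ι : Type*} [Fintype ι]

theorem indRM_le_of_mem {𝓐 : ℝ → Set (Set Ω)} {X : Ω → ℝ} {x : ℝ}
    (h : {ω | x < X ω} ∈ 𝓐 x) : indRM 𝓐 X ≤ x :=
  sInf_le ⟨x, h, rfl⟩

theorem exists_allocation_setOf_lt_subset [Nonempty ι] [DecidableEq ι] (X : Ω → ℝ)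
    (y : ι → ℝ) (A : ι → Set Ω) (hA : {ω | ∑ i, y i < X ω} ⊆ ⋃ i, A i) :
    ∃ X' : ι → Ω → ℝ, (∀ ω, ∑ i, X' i ω = X ω) ∧ ∀ i, {ω | y i < X' i ω} ⊆ A i := by
  have hcover : ∀ ω, ∃ i, ∑ j, y j < X ω → ω ∈ A i := fun ω => by
    by_cases hω : ∑ j, y j < X ω
    · obtain ⟨i, hi⟩ := mem_iUnion.1 (hA hω)
      exact ⟨i, fun _ => hi⟩
    · exact ⟨Classical.arbitrary ι, fun h => absurd h hω⟩
  choose j hj using hcover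
  refine ⟨fun i ω => y i + if i = j ω then X ω - ∑ k, y k else 0, fun ω => ?_, fun i ω hω => ?_⟩
  · simp [Finset.sum_add_distrib]
  · replace hω : y i < y i + if i = j ω then X ω - ∑ k, y k else 0 := hω
    split_ifs at hω with hi
    · exact hi ▸ hj ω (by linarith)
    · linarith

theorem setOf_sum_lt_subset_iUnion {X : Ω → ℝ} {X' : ι → Ω → ℝ}
    (hX : ∀ ω, ∑ i, X' i ω = X ω) (y : ι → ℝ) :
    {ω | ∑ i, y i < X ω} ⊆ ⋃ i, {ω | y i < X' i ω} := fun ω hω => by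
  obtain ⟨i, -, hi⟩ := Finset.exists_lt_of_sum_lt (show ∑ i, y i < ∑ i, X' i ω by rwa [hX])
  exact mem_iUnion.2 ⟨i, hi⟩

end RiskMeasure

/-- Inf-convolution of risk measures induced by families of downsets: it equals the
risk measure induced by the family `𝓐̃_x = ⋃_{y₁+⋯+yₙ=x} {A₁ ∪ ⋯ ∪ Aₙ : Aᵢ ∈ 𝓐^{(i)}_{yᵢ}}`. -/
theorem stmt_16 {Ω : Type*} (n : ℕ) (hn : 0 < n) (𝓐 : Fin n → ℝ → Set (Set Ω))
    (hdown : ∀ i (x : ℝ), ∅ ∈ 𝓐 i x ∧ ∀ A B : Set Ω, B ∈ 𝓐 i x → A ⊆ B → A ∈ 𝓐 i x)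
    (hfin : ∀ i (X : Ω → ℝ), indRM (𝓐 i) X ≠ ⊤)
    (X : Ω → ℝ) :
    let Atilde : ℝ → Set (Set Ω) := fun x =>
      {S : Set Ω | ∃ y : Fin n → ℝ, (∑ i, y i) = x ∧
        ∃ A : Fin n → Set Ω, (∀ i, A i ∈ 𝓐 i (y i)) ∧ S = ⋃ i, A i}
    sInf {s : EReal | ∃ X' : Fin n → Ω → ℝ,
        (∀ ω, ∑ i, X' i ω = X ω) ∧ s = ∑ i, indRM (𝓐 i) (X' i)} =
      sInf ((fun x : ℝ => (x : EReal)) '' {x : ℝ | {ω | x < X ω} ∈ Atilde x}) := by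
  intro Atilde
  have : Nonempty (Fin n) := ⟨⟨0, hn⟩⟩
  apply le_antisymm
  · refine le_sInf ?_
    rintro _ ⟨x, hx, rfl⟩
    obtain ⟨y, rfl, A, hA, hcover⟩ := hx
    obtain ⟨X', hX', hsub⟩ := exists_allocation_setOf_lt_subset X y A hcover.subset
    refine sInf_le_of_le ⟨X', hX', rfl⟩ ?_
    calc ∑ i, indRM (𝓐 i) (X' i) ≤ ∑ i, (y i : EReal) := Finset.sum_le_sum fun i _ =>
          indRM_le_of_mem ((hdown i (y i)).2 _ _ (hA i) (hsub i))
      _ = _ := (EReal.coe_finset_sum _ y).symm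
  · refine le_sInf ?_
    rintro _ ⟨X', hX', rfl⟩
    refine EReal.le_sum_sInf_image_coe (fun i => hfin i (X' i)) fun y hy => sInf_le ⟨_, ?_, rfl⟩
    refine ⟨y, rfl, fun i => {ω | y i < X' i ω} ∩ {ω | ∑ j, y j < X ω},
      fun i => (hdown i (y i)).2 _ _ (hy i) inter_subset_left, ?_⟩
    rw [← iUnion_inter, inter_eq_right.2 (setOf_sum_lt_subset_iUnion hX' y)]
end

section
/- Let Λ_i: ℝ → (0,1) be increasing functions and w_i continuous and subadditive capacities, i = 1,…,n, with λ_i^− = inf Λ_i > 0 and λ_i^+ = sup Λ_i < 1. Define Γ(X) = inf{x ∈ ℝ : there exist y₁+⋯+y_n = x and a measurable partition (A₁,…,A_n) of Ω with w_i({X > x} ∩ A_i) ≤ Λ_i(y_i) for all i}. If inf over all measurable partitions (A₁,…,A_n) of Ω of min_{i} max( w_i(A_i)/λ_i^−, max_{j≠i} w_j(A_j)/λ_j^+ ) is strictly greater than 1, then Γ(X) > −∞ for every random variable X. -/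
open Set Filter

/-- Finiteness of the inf-convolution of `ΛᵢVaR^{wᵢ}` for increasing `Λᵢ` and continuous
subadditive capacities `wᵢ`: if the infimum, over measurable partitions `(A₁,…,Aₙ)` of `Ω`,
of `minᵢ max(wᵢ(Aᵢ)/λᵢ⁻, max_{j≠i} w_j(A_j)/λ_j⁺)` is strictly greater than `1`,
then `Γ(X) > -∞` for every random variable `X`. -/
theorem stmt_18 {Ω : Type*} (n : ℕ) (hn : 0 < n)
    (w : Fin n → Set Ω → ℝ) (Λ : Fin n → ℝ → ℝ)
    (hw_mono : ∀ i, ∀ A B : Set Ω, A ⊆ B → w i A ≤ w i B)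
    (hw_empty : ∀ i, w i (∅ : Set Ω) = 0) (hw_univ : ∀ i, w i (univ : Set Ω) = 1)
    (hw_cont : ∀ i, ∀ A : ℕ → Set Ω, (∀ k, A (k + 1) ⊆ A k) → (⋂ k, A k) = ∅ →
      Tendsto (fun k => w i (A k)) atTop (nhds 0))
    (hw_subadd : ∀ i, ∀ A B : Set Ω, w i (A ∪ B) ≤ w i A + w i B)
    (hΛ_mono : ∀ i, Monotone (Λ i)) (hΛ_range : ∀ i x, Λ i x ∈ Ioo (0 : ℝ) 1)
    (hlam_inf : ∀ i, 0 < ⨅ x : ℝ, Λ i x) (hlam_sup : ∀ i, (⨆ x : ℝ, Λ i x) < 1)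
    (hcond : 1 < sInf {r : ℝ | ∃ A : Fin n → Set Ω,
      (⋃ i, A i) = univ ∧ Pairwise (Function.onFun Disjoint A) ∧
      r = ⨅ i, max (w i (A i) / ⨅ x : ℝ, Λ i x)
        (⨆ j ∈ ({i}ᶜ : Set (Fin n)), w j (A j) / ⨆ x : ℝ, Λ j x)})
    (X : Ω → ℝ) :
    (⊥ : EReal) < sInf ((fun x : ℝ => (x : EReal)) '' {x : ℝ |
      ∃ y : Fin n → ℝ, (∑ i, y i) = x ∧
      ∃ A : Fin n → Set Ω, (⋃ i, A i) = univ ∧ Pairwise (Function.onFun Disjoint A) ∧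
        ∀ i, w i ({ω | x < X ω} ∩ A i) ≤ Λ i (y i)}) := by
  haveI : Nonempty (Fin n) := Fin.pos_iff_nonempty.mp hn
  set S := {r : ℝ | ∃ A : Fin n → Set Ω,
      (⋃ i, A i) = univ ∧ Pairwise (Function.onFun Disjoint A) ∧
      r = ⨅ i, max (w i (A i) / ⨅ x : ℝ, Λ i x)
        (⨆ j ∈ ({i}ᶜ : Set (Fin n)), w j (A j) / ⨆ x : ℝ, Λ j x)} with hSdef
  set c := sInf S with hcdef
  have hc1 : (1:ℝ) < c := hcond
  have hbA : ∀ i, BddAbove (range (Λ i)) := fun i =>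
    ⟨1, by rintro v ⟨s, rfl⟩; exact le_of_lt (hΛ_range i s).2⟩
  have hbB : ∀ i, BddBelow (range (Λ i)) := fun i =>
    ⟨0, by rintro v ⟨s, rfl⟩; exact le_of_lt (hΛ_range i s).1⟩
  have hle_sup : ∀ i s, Λ i s ≤ ⨆ x : ℝ, Λ i x := fun i s => le_ciSup (hbA i) s
  have hinf_le : ∀ i s, (⨅ x : ℝ, Λ i x) ≤ Λ i s := fun i s => ciInf_le (hbB i) s
  have hp_pos : ∀ i, 0 < ⨆ x : ℝ, Λ i x := fun i =>
    lt_of_lt_of_le (hlam_inf i) (le_trans (hinf_le i 0) (hle_sup i 0))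
  have hmp : ∀ i, (⨅ x : ℝ, Λ i x) ≤ ⨆ x : ℝ, Λ i x := fun i =>
    le_trans (hinf_le i 0) (hle_sup i 0)
  set δ : Fin n → ℝ := fun i => (c - 1)/2 * ⨅ x : ℝ, Λ i x with hδdef
  have hδpos : ∀ i, 0 < δ i := fun i => mul_pos (by linarith) (hlam_inf i)
  have htt : ∀ i, ∃ s : ℝ, Λ i s < (⨅ x : ℝ, Λ i x) + δ i := fun i =>
    exists_lt_of_ciInf_lt (lt_add_of_pos_right _ (hδpos i))
  choose t ht using htt
  have hKex : ∀ i, ∃ K : ℕ, w i {ω | X ω ≤ -(K:ℝ)} < δ i := by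
    intro i
    have hdec : ∀ k : ℕ, {ω | X ω ≤ -((k+1:ℕ):ℝ)} ⊆ {ω | X ω ≤ -(k:ℝ)} := by
      intro k ω hω
      simp only [mem_setOf_eq] at *
      push_cast at hω
      linarith
    have hint : (⋂ k : ℕ, {ω | X ω ≤ -((k:ℕ):ℝ)}) = ∅ := by
      ext ω
      simp only [mem_iInter, mem_setOf_eq, mem_empty_iff_false, iff_false, not_forall, not_le]
      obtain ⟨k, hk⟩ := exists_nat_gt (-X ω)
      exact ⟨k, by linarith⟩
    exact ((hw_cont i _ hdec hint).eventually_lt_const (hδpos i)).exists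
  choose K hKw using hKex
  set Kmax : ℕ := Finset.univ.sup K with hKm
  have hKmono : ∀ i (x : ℝ), x ≤ -(Kmax:ℝ) → w i {ω | X ω ≤ x} < δ i := by
    intro i x hx
    refine lt_of_le_of_lt (hw_mono i _ _ ?_) (hKw i)
    intro ω hω
    simp only [mem_setOf_eq] at *
    have hKi : (K i : ℝ) ≤ (Kmax : ℝ) := by
      exact_mod_cast Finset.le_sup (Finset.mem_univ i)
    linarith
  set b : ℝ := min (-(Kmax:ℝ) - 1) (∑ i, t i) with hbdef
  refine lt_of_lt_of_le (EReal.bot_lt_coe b) (le_sInf ?_)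
  rintro z ⟨x, hx, rfl⟩
  suffices hbx : b ≤ x by
    show (b : EReal) ≤ (x : EReal)
    exact_mod_cast hbx
  obtain ⟨y, hsum, A, hAu, hAd, hA⟩ := hx
  by_cases hxK : -(Kmax:ℝ) - 1 < x
  · exact le_trans (min_le_left _ _) (le_of_lt hxK)
  push_neg at hxK
  have hxK' : x ≤ -(Kmax:ℝ) := by linarith
  have hmem : (⨅ i, max (w i (A i) / ⨅ x : ℝ, Λ i x)
        (⨆ j ∈ ({i}ᶜ : Set (Fin n)), w j (A j) / ⨆ x : ℝ, Λ j x)) ∈ S := ⟨A, hAu, hAd, rfl⟩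
  have hSbdd : BddBelow S := by
    by_contra hb
    rw [hcdef, Real.sInf_of_not_bddBelow hb] at hc1
    linarith
  have hcle : ∀ i, c ≤ max (w i (A i) / ⨅ x : ℝ, Λ i x)
        (⨆ j ∈ ({i}ᶜ : Set (Fin n)), w j (A j) / ⨆ x : ℝ, Λ j x) := fun i =>
    le_trans (csInf_le hSbdd hmem) (ciInf_le (Set.finite_range _).bddBelow i)
  have hBlow : ∀ i, w i (A i) - δ i < w i ({ω | x < X ω} ∩ A i) := by
    intro i
    have hsub : A i ⊆ ({ω | x < X ω} ∩ A i) ∪ {ω | X ω ≤ x} := by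
      intro ω hω
      by_cases h : x < X ω
      · exact Or.inl ⟨h, hω⟩
      · exact Or.inr (le_of_not_gt h)
    have h1 := le_trans (hw_mono i _ _ hsub) (hw_subadd i _ _)
    have h2 := hKmono i x hxK'
    linarith
  by_cases hcase : ∀ j, w j (A j) ≤ (1 + c)/2 * ⨆ x : ℝ, Λ j x
  · have hwge : ∀ i, c * (⨅ x : ℝ, Λ i x) ≤ w i (A i) := by
      intro i
      have hsup_le : (⨆ j ∈ ({i}ᶜ : Set (Fin n)), w j (A j) / ⨆ x : ℝ, Λ j x) ≤ (1+c)/2 := by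
        refine Real.iSup_le (fun j => Real.iSup_le (fun _ => ?_) (by linarith)) (by linarith)
        exact (div_le_iff₀ (hp_pos j)).mpr (hcase j)
      have hlt : (⨆ j ∈ ({i}ᶜ : Set (Fin n)), w j (A j) / ⨆ x : ℝ, Λ j x) < c :=
        lt_of_le_of_lt hsup_le (by linarith)
      have ha : c ≤ w i (A i) / ⨅ x : ℝ, Λ i x :=
        (le_max_iff.mp (hcle i)).resolve_right (not_le.mpr hlt)
      exact (le_div_iff₀ (hlam_inf i)).mp ha
    have hy : ∀ i, t i ≤ y i := by
      intro i
      by_contra hlt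
      push_neg at hlt
      have h1 : Λ i (y i) ≤ Λ i (t i) := hΛ_mono i (le_of_lt hlt)
      have h2 := hA i
      have h3 := hBlow i
      have h4 := hwge i
      have h5 := ht i
      have hδeq : c * (⨅ x : ℝ, Λ i x) - δ i = (⨅ x : ℝ, Λ i x) + δ i := by
        simp only [hδdef]
        ring
      linarith
    calc b ≤ ∑ i, t i := min_le_right _ _
      _ ≤ ∑ i, y i := Finset.sum_le_sum (fun i _ => hy i)
      _ = x := hsum
  · exfalso
    push_neg at hcase
    obtain ⟨j, hj⟩ := hcase
    have h2 := hA j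
    have h3 := hBlow j
    have h4 := hle_sup j (y j)
    have hδle : δ j ≤ (c-1)/2 * ⨆ x : ℝ, Λ j x := by
      simp only [hδdef]
      exact mul_le_mul_of_nonneg_left (hmp j) (by linarith)
    have hid : (1+c)/2 * (⨆ x : ℝ, Λ j x) - (c-1)/2 * (⨆ x : ℝ, Λ j x) = ⨆ x : ℝ, Λ j x := by
      ring
    linarith
end
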